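/- arXiv:2206.02010 — 12 statements merged into one kernel-verified Lean document; each statement's English description precedes it below -/
import Mathlib

section
/- There exists a minimizer of the Tikhonov functional: there is u* ∈ D such that T_α^δ(u*) ≤ T_α^δ(u) for all u ∈ D. -/
/-!
Writing `u = G v + ū`, the problem becomes the minimization of
`J v = ‖F (G v + ū) - f^δ‖^r + α ‖v‖^r` over `{v | G v + ū ∈ D(F)}`, and we minimize in the
weak-* topology of `X = X̃*`. Bounded subsets of `X` are equicontinuous, so on them weak-*
convergence is uniform on the compact set containing `G̃ (unit ball)`; hence `G` is weak-*-to-norm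
continuous on balls. Therefore `J` is lower semicontinuous on every ball, the constraint set meets
every ball in a weak-* compact set (Banach–Alaoglu), and the coercive penalty `α ‖v‖^r` confines
the minimization to a single ball.
-/

open Set Metric WeakDual

theorem le_rpow_inv_of_mul_rpow_le {α r t c : ℝ} (hα : 0 < α) (hr : 0 < r) (ht : 0 ≤ t)
    (h : α * t ^ r ≤ c) : t ≤ (c / α) ^ r⁻¹ := by
  have hc : 0 ≤ c / α := div_nonneg ((mul_nonneg hα.le (Real.rpow_nonneg ht r)).trans h) hα.le
  rw [Real.le_rpow_inv_iff_of_pos ht hc hr, le_div_iff₀ hα, mul_comm]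
  exact h

theorem LowerSemicontinuous.rpow_const_of_nonneg {X : Type*} [TopologicalSpace X] {f : X → ℝ}
    (hf : LowerSemicontinuous f) (hf0 : ∀ x, 0 ≤ f x) {r : ℝ} (hr : 0 ≤ r) :
    LowerSemicontinuous fun x => f x ^ r := by
  have hmono : Monotone fun t : ℝ => max t 0 ^ r := fun s t hst =>
    Real.rpow_le_rpow (le_max_right _ _) (max_le_max_right 0 hst) hr
  have hcont : Continuous fun t : ℝ => max t 0 ^ r :=
    (continuous_id.max continuous_const).rpow_const fun _ => Or.inr hr
  simpa [Function.comp_def, max_eq_left (hf0 _)] using hcont.comp_lowerSemicontinuous hf hmono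

theorem LowerSemicontinuousOn.exists_isMinOn_of_le_outside {X : Type*} [TopologicalSpace X]
    {J : X → ℝ} {S K : Set X} (hK : IsCompact (S ∩ K)) (hJ : LowerSemicontinuousOn J (S ∩ K))
    {x₀ : X} (hx₀ : x₀ ∈ S ∩ K) (hout : ∀ x ∈ S, x ∉ K → J x₀ ≤ J x) :
    ∃ a ∈ S, IsMinOn J S a := by
  obtain ⟨a, ha, hmin⟩ := hJ.exists_isMinOn ⟨x₀, hx₀⟩ hK
  refine ⟨a, ha.1, fun x hx => ?_⟩
  by_cases hxK : x ∈ K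
  · exact hmin ⟨hx, hxK⟩
  · exact (hmin hx₀).trans (hout x hx hxK)

namespace WeakDual

variable {𝕜 E : Type*} [NontriviallyNormedField 𝕜] [NormedAddCommGroup E] [NormedSpace 𝕜 E]

theorem continuousOn_uniformFun_domRestrict_closedBall {K : Set E} (hK : IsCompact K) (R : ℝ) :
    ContinuousOn (fun φ : WeakDual 𝕜 E => UniformFun.ofFun (K.domRestrict φ))
      (toStrongDual ⁻¹' closedBall 0 R) := by
  have : CompactSpace K := isCompact_iff_compactSpace.mp hK
  rw [continuousOn_iff_continuous_domRestrict]
  have hequi : Equicontinuous fun φ : toStrongDual ⁻¹' closedBall (0 : StrongDual 𝕜 E) R =>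
      K.domRestrict (φ : WeakDual 𝕜 E) := by
    refine (LipschitzWith.uniformEquicontinuous _ R.toNNReal fun φ => ?_).equicontinuous
    refine ((toStrongDual (φ : WeakDual 𝕜 E)).lipschitz.weaken ?_).restrict K
    have hφR := mem_closedBall_zero_iff.1 φ.2
    exact (Real.le_toNNReal_iff_coe_le ((norm_nonneg _).trans hφR)).2 hφR
  have hpointwise : Continuous fun φ : toStrongDual ⁻¹' closedBall (0 : StrongDual 𝕜 E) R =>
      K.domRestrict (φ : WeakDual 𝕜 E) :=
    continuous_pi fun y => (eval_continuous (y : E)).comp continuous_subtype_val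
  exact continuous_iff_continuousAt.2 fun φ =>
    (hequi.tendsto_uniformFun_iff_pi _ _).2 (hpointwise.tendsto φ)

theorem lowerSemicontinuous_norm :
    LowerSemicontinuous fun φ : WeakDual 𝕜 E => ‖toStrongDual φ‖ :=
  lowerSemicontinuous_iff_isClosed_preimage.2 fun R => by
    convert isClosed_closedBall (0 : StrongDual 𝕜 E) R using 1
    ext
    simp

theorem exists_isMinOn_add_mul_rpow_norm [ProperSpace 𝕜] {Z : Type*} [TopologicalSpace Z]
    {A : WeakDual 𝕜 E → Z} (hA : ∀ R, ContinuousOn A (toStrongDual ⁻¹' closedBall 0 R))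
    {C : Set Z} (hC : IsClosed C) (hne : (A ⁻¹' C).Nonempty)
    {Φ : Z → ℝ} (hΦ : ContinuousOn Φ C) (hΦ0 : ∀ z, 0 ≤ Φ z)
    {α r : ℝ} (hα : 0 < α) (hr : 0 < r) :
    ∃ v ∈ A ⁻¹' C, IsMinOn (fun v => Φ (A v) + α * ‖toStrongDual v‖ ^ r) (A ⁻¹' C) v := by
  set J := fun v => Φ (A v) + α * ‖toStrongDual v‖ ^ r
  obtain ⟨v₀, hv₀⟩ := hne
  have hpenalty_le : ∀ v : WeakDual 𝕜 E, α * ‖toStrongDual v‖ ^ r ≤ J v :=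
    fun v => le_add_of_nonneg_left (hΦ0 _)
  set R := (J v₀ / α) ^ r⁻¹
  have hball : ∀ v : WeakDual 𝕜 E, α * ‖toStrongDual v‖ ^ r ≤ J v₀ →
      v ∈ toStrongDual ⁻¹' closedBall 0 R :=
    fun v hv => by simpa using le_rpow_inv_of_mul_rpow_le hα hr (norm_nonneg _) hv
  have hclosed : IsClosed (A ⁻¹' C ∩ toStrongDual ⁻¹' closedBall 0 R) := by
    rw [inter_comm]
    exact (hA R).preimage_isClosed_of_isClosed (isClosed_closedBall 0 R) hC
  have hlsc : LowerSemicontinuousOn J (A ⁻¹' C ∩ toStrongDual ⁻¹' closedBall 0 R) := by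
    refine ContinuousOn.lowerSemicontinuousOn ?_ |>.add ?_
    · exact hΦ.comp ((hA R).mono inter_subset_right) fun v hv => hv.1
    · refine LowerSemicontinuous.lowerSemicontinuousOn ?_ _
      exact continuous_const_mul α |>.comp_lowerSemicontinuous
        (lowerSemicontinuous_norm.rpow_const_of_nonneg (fun _ => norm_nonneg _) hr.le)
        (monotone_mul_left_of_nonneg hα.le)
  refine hlsc.exists_isMinOn_of_le_outside
    ((isCompact_closedBall 0 R).of_isClosed_subset hclosed inter_subset_right)
    ⟨hv₀, hball v₀ (hpenalty_le v₀)⟩ fun v _ hvR => ?_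
  by_contra! hlt
  exact hvR (hball v ((hpenalty_le v).trans hlt.le))

end WeakDual

theorem IsCompactOperator.continuousOn_weakDual_comp {𝕜 E F : Type*} [RCLike 𝕜]
    [NormedAddCommGroup E] [NormedSpace 𝕜 E] [NormedAddCommGroup F] [NormedSpace 𝕜 F]
    {T : E →L[𝕜] F} (hT : IsCompactOperator T) (R : ℝ) :
    ContinuousOn (fun φ : WeakDual 𝕜 F => (toStrongDual φ).comp T)
      (toStrongDual ⁻¹' closedBall 0 R) := by
  obtain ⟨K, hK, hTK⟩ := hT.image_closedBall_subset_compact 1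
  intro φ hφ
  have hunif := WeakDual.continuousOn_uniformFun_domRestrict_closedBall (𝕜 := 𝕜) hK R φ hφ
  rw [ContinuousWithinAt, UniformFun.tendsto_iff_tendstoUniformly,
    Metric.tendstoUniformly_iff] at hunif
  rw [ContinuousWithinAt, Metric.tendsto_nhds]
  intro ε hε
  filter_upwards [hunif (ε / 2) (half_pos hε)] with ψ hψ
  rw [dist_eq_norm]
  refine (ContinuousLinearMap.opNorm_le_of_unit_norm (half_pos hε).le fun x hx => ?_).trans_lt
    (half_lt_self hε)
  simpa [dist_eq_norm, norm_sub_rev] using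
    (hψ ⟨T x, hTK (mem_image_of_mem _ (by simp [hx]))⟩).le

theorem tikhonov_minimizer_exists_general
    (Xt : Type*) [NormedAddCommGroup Xt] [NormedSpace ℝ Xt]
    (Y : Type*) [NormedAddCommGroup Y]
    (Gt : Xt →L[ℝ] Xt) (hGtcompact : IsCompactOperator Gt)
    (G : StrongDual ℝ Xt →L[ℝ] StrongDual ℝ Xt)
    (hGadj : ∀ (φ : StrongDual ℝ Xt) (x : Xt), G φ x = φ (Gt x))
    (F : StrongDual ℝ Xt → Y) (DF : Set (StrongDual ℝ Xt))
    (hDFclosed : IsClosed DF) (hFcont : ContinuousOn F DF)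
    (D : Set (StrongDual ℝ Xt)) (hD : D = DF ∩ Set.range G)
    (hDne : D.Nonempty)
    (r : ℝ) (hr : 0 < r)
    (ubar : StrongDual ℝ Xt) (hubar : ubar ∈ Set.range G)
    (α : ℝ) (hα : 0 < α) (fδ : Y)
    (T : StrongDual ℝ Xt → ℝ)
    (hT : ∀ u ∈ D, ∀ v : StrongDual ℝ Xt, G v = u - ubar →
      T u = ‖F u - fδ‖ ^ r + α * ‖v‖ ^ r) :
    ∃ ustar ∈ D, ∀ u ∈ D, T ustar ≤ T u := by
  obtain ⟨b, rfl⟩ := hubar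
  subst hD
  set A : WeakDual ℝ Xt → StrongDual ℝ Xt := fun v => G (toStrongDual v) + G b
  have hA : ∀ R, ContinuousOn A (toStrongDual ⁻¹' closedBall 0 R) := fun R => by
    have hG : ∀ φ, G φ = φ.comp Gt := fun φ => ContinuousLinearMap.ext (hGadj φ)
    simp only [A, hG]
    exact (hGtcompact.continuousOn_weakDual_comp R).add continuousOn_const
  have hA_range : ∀ v, A v ∈ range G := fun v => ⟨toStrongDual v + b, by simp [A]⟩
  have hA_onto : ∀ u ∈ range G, ∃ v, A v = u := by
    rintro _ ⟨a, rfl⟩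
    exact ⟨StrongDual.toWeakDual (a - b), by simp [A]⟩
  have hT_A : ∀ v, A v ∈ DF → T (A v) = ‖F (A v) - fδ‖ ^ r + α * ‖toStrongDual v‖ ^ r :=
    fun v hv => hT _ ⟨hv, hA_range v⟩ _ (by simp [A])
  obtain ⟨u₀, hu₀DF, hu₀G⟩ := hDne
  obtain ⟨v₀, rfl⟩ := hA_onto u₀ hu₀G
  obtain ⟨v, hv, hmin⟩ := WeakDual.exists_isMinOn_add_mul_rpow_norm hA hDFclosed ⟨v₀, hu₀DF⟩
    ((hFcont.sub continuousOn_const).norm.rpow_const fun _ _ => Or.inr hr.le)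
    (fun _ => Real.rpow_nonneg (norm_nonneg _) r) hα hr
  refine ⟨A v, ⟨hv, hA_range v⟩, fun u hu => ?_⟩
  obtain ⟨w, rfl⟩ := hA_onto u hu.2
  rw [hT_A v hv, hT_A w hu.1]
  exact hmin hu.1

/-- Existence of a minimizer of the Tikhonov functional
`T_α^δ(u) = ‖F(u) − f^δ‖^r + α‖G⁻¹(u − ū)‖^r` over `D = D(F) ∩ range G`,
where `X = X̃*` is the dual of a separable Banach space and `G` is the adjoint
of a compact operator `G̃` on `X̃`. -/
theorem tikhonov_minimizer_exists
    (Xt : Type*) [NormedAddCommGroup Xt] [NormedSpace ℝ Xt] [CompleteSpace Xt]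
    [TopologicalSpace.SeparableSpace Xt]
    (Y : Type*) [NormedAddCommGroup Y] [NormedSpace ℝ Y]
    (Gt : Xt →L[ℝ] Xt) (hGtcompact : IsCompactOperator Gt)
    (G : StrongDual ℝ Xt →L[ℝ] StrongDual ℝ Xt)
    (hGadj : ∀ (φ : StrongDual ℝ Xt) (x : Xt), G φ x = φ (Gt x))
    (hGinj : Function.Injective G)
    (F : StrongDual ℝ Xt → Y) (DF : Set (StrongDual ℝ Xt))
    (hDFclosed : IsClosed DF) (hFcont : ContinuousOn F DF)
    (D : Set (StrongDual ℝ Xt)) (hD : D = DF ∩ Set.range G)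
    (hDne : D.Nonempty)
    (r : ℝ) (hr : 0 < r)
    (ubar : StrongDual ℝ Xt) (hubar : ubar ∈ Set.range G)
    (α : ℝ) (hα : 0 < α) (fδ : Y)
    (T : StrongDual ℝ Xt → ℝ)
    (hT : ∀ u ∈ D, ∀ v : StrongDual ℝ Xt, G v = u - ubar →
      T u = ‖F u - fδ‖ ^ r + α * ‖v‖ ^ r) :
    ∃ ustar ∈ D, ∀ u ∈ D, T ustar ≤ T u :=
  tikhonov_minimizer_exists_general Xt Y Gt hGtcompact G hGadj F DF hDFclosed hFcont D hD hDne r hr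
    ubar hubar α hα fδ T hT
end

section
/- Every minimizing sequence of the Tikhonov functional over D has a subsequence that converges in the norm of X to a minimizer: if (u_n) ⊆ D satisfies T_α^δ(u_n) → inf_{u ∈ D} T_α^δ(u), then there is a subsequence (u_{n_k}) and an element û ∈ D with ‖u_{n_k} − û‖ → 0 and T_α^δ(û) = inf_{u ∈ D} T_α^δ(u). -/
/-!
Write `u_n = ū + G v_n`. Along a minimizing sequence the penalty `α ‖v_n‖ ^ r` stays bounded,
so the `v_n` are bounded and, `X̃` being separable, sequential Banach–Alaoglu yields a
weak-* convergent subsequence `v_{n_k} → v̂`. A bounded family of functionals is equicontinuous,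
so it converges uniformly on the compact set containing `G̃ (closedBall 0 1)`; this is exactly
norm convergence `G v_{n_k} → G v̂`, hence `u_{n_k} → û := ū + G v̂` in norm, and `û ∈ D` since `D(F)`
is closed. The data term converges by continuity of `F` and the dual norm is weak-* lower
semicontinuous, so `T û ≤ lim T u_{n_k} = inf T`.
-/

open Filter Set Topology

theorem le_rpow_inv_of_add_mul_rpow_le {a x α r B : ℝ} (ha : 0 ≤ a) (hx : 0 ≤ x) (hα : 0 < α)
    (hr : 0 < r) (h : a + α * x ^ r ≤ B) : x ≤ (B / α) ^ r⁻¹ := by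
  have hxr : 0 ≤ α * x ^ r := by positivity
  exact (Real.le_rpow_inv_iff_of_pos hx (div_nonneg (by linarith) hα.le) hr).mpr
    ((le_div_iff₀' hα).mpr (by linarith))

section

variable {𝕜 E F : Type*} [NontriviallyNormedField 𝕜]
  [SeminormedAddCommGroup E] [NormedSpace 𝕜 E] [SeminormedAddCommGroup F] [NormedSpace 𝕜 F]
  {ι : Type*} {l : Filter ι}

theorem ContinuousLinearMap.tendstoUniformlyOn_of_tendsto_apply {f : ι → E →L[𝕜] F}
    {g : E →L[𝕜] F} {C : ℝ} (hC : ∀ i, ‖f i‖ ≤ C)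
    (hfg : ∀ x, Tendsto (fun i => f i x) l (𝓝 (g x))) {K : Set E} (hK : IsCompact K) :
    TendstoUniformlyOn (fun i => ⇑(f i)) g l K := by
  have hequi : Equicontinuous ((↑) ∘ f : ι → E → F) :=
    ((NormedSpace.equicontinuous_TFAE f).out 5 1).mp (⟨C, hC⟩ : ∃ C, ∀ i, ‖f i‖ ≤ C)
  have := (EquicontinuousOn.tendsto_uniformOnFun_iff_pi' (𝔖 := {K}) (by simpa using hK)
    (by simpa using hequi.equicontinuousOn K) l g).mpr ?_
  · rw [UniformOnFun.tendsto_iff_tendstoUniformlyOn] at this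
    exact this K rfl
  · rw [sUnion_singleton]
    exact tendsto_pi_nhds.mpr fun x => hfg x

theorem ContinuousLinearMap.opNorm_le_of_tendsto_apply [l.NeBot] {f : ι → E →L[𝕜] F}
    {g : E →L[𝕜] F} {M : ℝ} (hfg : ∀ x, Tendsto (fun i => f i x) l (𝓝 (g x)))
    (hM : Tendsto (fun i => ‖f i‖) l (𝓝 M)) : ‖g‖ ≤ M :=
  g.opNorm_le_bound (ge_of_tendsto' hM fun _ => norm_nonneg _) fun x =>
    le_of_tendsto_of_tendsto' (hfg x).norm (hM.mul_const ‖x‖) fun i => (f i).le_opNorm x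

theorem ContinuousLinearMap.add_mul_rpow_opNorm_le_of_tendsto [l.NeBot]
    {f : ι → E →L[𝕜] F} {g : E →L[𝕜] F} {a : ι → ℝ} {a₀ c α r : ℝ} (hα : 0 < α) (hr : 0 < r)
    (hfg : ∀ x, Tendsto (fun i => f i x) l (𝓝 (g x))) (ha : Tendsto a l (𝓝 a₀))
    (hc : Tendsto (fun i => a i + α * ‖f i‖ ^ r) l (𝓝 c)) : a₀ + α * ‖g‖ ^ r ≤ c := by
  have hpow : Tendsto (fun i => ‖f i‖ ^ r) l (𝓝 ((c - a₀) / α)) :=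
    ((hc.sub ha).div_const α).congr fun i => by field_simp; ring
  have hL : 0 ≤ (c - a₀) / α := ge_of_tendsto' hpow fun i => by positivity
  have hnorm : Tendsto (fun i => ‖f i‖) l (𝓝 (((c - a₀) / α) ^ r⁻¹)) :=
    (hpow.rpow_const (Or.inr (inv_nonneg.2 hr.le))).congr fun i =>
      Real.rpow_rpow_inv (norm_nonneg _) hr.ne'
  have hg : ‖g‖ ^ r ≤ (c - a₀) / α :=
    (Real.le_rpow_inv_iff_of_pos (norm_nonneg _) hL hr).mp (opNorm_le_of_tendsto_apply hfg hnorm)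
  rw [le_div_iff₀' hα] at hg
  linarith

end

theorem StrongDual.exists_subseq_tendsto_apply {𝕜 E : Type*} [NontriviallyNormedField 𝕜]
    [ProperSpace 𝕜] [SeminormedAddCommGroup E] [NormedSpace 𝕜 E]
    [TopologicalSpace.SeparableSpace E] {v : ℕ → StrongDual 𝕜 E} {R : ℝ}
    (hv : ∀ n, ‖v n‖ ≤ R) :
    ∃ σ : ℕ → ℕ, StrictMono σ ∧
      ∃ w : StrongDual 𝕜 E, ∀ x, Tendsto (fun k => v (σ k) x) atTop (𝓝 (w x)) := by
  obtain ⟨w, -, σ, hσ, hw⟩ := WeakDual.isSeqCompact_closedBall 𝕜 E 0 R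
    (x := fun n => StrongDual.toWeakDual (v n)) fun n => by simpa using hv n
  exact ⟨σ, hσ, WeakDual.toStrongDual w, fun x => ((WeakDual.eval_continuous x).tendsto w).comp hw⟩

theorem IsCompactOperator.tendsto_comp_of_tendsto_apply {𝕜 E F G ι : Type*} [RCLike 𝕜]
    [NormedAddCommGroup E] [NormedSpace 𝕜 E] [NormedAddCommGroup F] [NormedSpace 𝕜 F]
    [NormedAddCommGroup G] [NormedSpace 𝕜 G] {l : Filter ι} {T : E →L[𝕜] F}
    (hT : IsCompactOperator T) {f : ι → F →L[𝕜] G} {g : F →L[𝕜] G} {C : ℝ}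
    (hC : ∀ i, ‖f i‖ ≤ C) (hfg : ∀ y, Tendsto (fun i => f i y) l (𝓝 (g y))) :
    Tendsto (fun i => (f i).comp T) l (𝓝 (g.comp T)) := by
  obtain ⟨K, hK, hTK⟩ := hT.image_closedBall_subset_compact 1
  have hunif := Metric.tendstoUniformlyOn_iff.mp
    (ContinuousLinearMap.tendstoUniformlyOn_of_tendsto_apply hC hfg hK)
  refine Metric.tendsto_nhds.mpr fun ε hε => ?_
  filter_upwards [hunif (ε / 2) (half_pos hε)] with i hi
  rw [dist_eq_norm, ← ContinuousLinearMap.sub_comp]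
  refine lt_of_le_of_lt (ContinuousLinearMap.opNorm_le_of_unit_norm (half_pos hε).le
    fun x hx => ?_) (half_lt_self hε)
  rw [ContinuousLinearMap.comp_apply, sub_apply, ← dist_eq_norm, dist_comm]
  exact (hi _ (hTK (mem_image_of_mem T (by simp [hx])))).le

theorem tikhonov_minimizing_sequence_subconverges_general
    (Xt : Type*) [NormedAddCommGroup Xt] [NormedSpace ℝ Xt]
    [TopologicalSpace.SeparableSpace Xt]
    (Y : Type*) [NormedAddCommGroup Y]
    (Gt : Xt →L[ℝ] Xt) (hGtcompact : IsCompactOperator Gt)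
    (G : StrongDual ℝ Xt →L[ℝ] StrongDual ℝ Xt)
    (hGadj : ∀ (φ : StrongDual ℝ Xt) (x : Xt), G φ x = φ (Gt x))
    (F : StrongDual ℝ Xt → Y) (DF : Set (StrongDual ℝ Xt))
    (hDFclosed : IsClosed DF) (hFcont : ContinuousOn F DF)
    (D : Set (StrongDual ℝ Xt)) (hD : D = DF ∩ Set.range G)
    (r : ℝ) (hr : 0 < r)
    (ubar : StrongDual ℝ Xt) (hubar : ubar ∈ Set.range G)
    (α : ℝ) (hα : 0 < α) (fδ : Y)
    (T : StrongDual ℝ Xt → ℝ)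
    (hT : ∀ u ∈ D, ∀ v : StrongDual ℝ Xt, G v = u - ubar →
      T u = ‖F u - fδ‖ ^ r + α * ‖v‖ ^ r)
    (un : ℕ → StrongDual ℝ Xt) (hun : ∀ n, un n ∈ D)
    (hmin : Tendsto (fun n => T (un n)) atTop (𝓝 (sInf (T '' D)))) :
    ∃ φ : ℕ → ℕ, StrictMono φ ∧ ∃ uhat ∈ D,
      Tendsto (fun k => ‖un (φ k) - uhat‖) atTop (𝓝 0) ∧
      T uhat = sInf (T '' D) := by
  obtain ⟨q, rfl⟩ := hubar
  have hG (φ : StrongDual ℝ Xt) : G φ = φ.comp Gt := ContinuousLinearMap.ext (hGadj φ)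
  have hDF : ∀ u ∈ D, u ∈ DF := fun u hu => (hD ▸ hu).1
  have hrange : ∀ u ∈ D, ∃ v, G v = u - G q := fun u hu => by
    obtain ⟨p, hp⟩ := (hD ▸ hu).2
    exact ⟨p - q, by rw [map_sub, hp]⟩
  have hT_nonneg : ∀ u ∈ D, 0 ≤ T u := fun u hu => by
    obtain ⟨v, hv⟩ := hrange u hu
    rw [hT u hu v hv]
    positivity
  choose v hv using fun n => hrange (un n) (hun n)
  obtain ⟨B, hB⟩ := hmin.bddAbove_range
  have hv_bdd (n : ℕ) : ‖v n‖ ≤ (B / α) ^ r⁻¹ :=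
    le_rpow_inv_of_add_mul_rpow_le (by positivity) (norm_nonneg _) hα hr
      ((hT _ (hun n) _ (hv n)).symm.trans_le (hB ⟨n, rfl⟩))
  obtain ⟨σ, hσ, w, hw⟩ := StrongDual.exists_subseq_tendsto_apply hv_bdd
  have hconv : Tendsto (fun k => un (σ k)) atTop (𝓝 (G w + G q)) := by
    have := (hGtcompact.tendsto_comp_of_tendsto_apply (fun k => hv_bdd (σ k)) hw).add_const (G q)
    simpa only [← hG, hv, sub_add_cancel] using this
  have hlimD : G w + G q ∈ D := hD ▸
    ⟨hDFclosed.mem_of_tendsto hconv (.of_forall fun k => hDF _ (hun _)), w + q, map_add G w q⟩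
  have hfit : Tendsto (fun k => ‖F (un (σ k)) - fδ‖ ^ r) atTop
      (𝓝 (‖F (G w + G q) - fδ‖ ^ r)) :=
    (((hFcont _ (hDF _ hlimD)).tendsto.comp (tendsto_nhdsWithin_iff.2
      ⟨hconv, .of_forall fun k => hDF _ (hun _)⟩)).sub_const fδ).norm.rpow_const (Or.inr hr.le)
  have hle : T (G w + G q) ≤ sInf (T '' D) := by
    rw [hT _ hlimD w (add_sub_cancel_right _ _).symm]
    refine ContinuousLinearMap.add_mul_rpow_opNorm_le_of_tendsto hα hr hw hfit ?_
    simpa only [Function.comp_def, hT _ (hun _) _ (hv _)] using hmin.comp hσ.tendsto_atTop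
  refine ⟨σ, hσ, _, hlimD, tendsto_iff_norm_sub_tendsto_zero.mp hconv, hle.antisymm ?_⟩
  exact csInf_le ⟨0, forall_mem_image.2 hT_nonneg⟩ (mem_image_of_mem T hlimD)

/-- Every minimizing sequence of the Tikhonov functional over `D` has a subsequence
converging in the norm of `X` to a minimizer. -/
theorem tikhonov_minimizing_sequence_subconverges
    (Xt : Type*) [NormedAddCommGroup Xt] [NormedSpace ℝ Xt] [CompleteSpace Xt]
    [TopologicalSpace.SeparableSpace Xt]
    (Y : Type*) [NormedAddCommGroup Y] [NormedSpace ℝ Y]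
    (Gt : Xt →L[ℝ] Xt) (hGtcompact : IsCompactOperator Gt)
    (G : StrongDual ℝ Xt →L[ℝ] StrongDual ℝ Xt)
    (hGadj : ∀ (φ : StrongDual ℝ Xt) (x : Xt), G φ x = φ (Gt x))
    (hGinj : Function.Injective G)
    (F : StrongDual ℝ Xt → Y) (DF : Set (StrongDual ℝ Xt))
    (hDFclosed : IsClosed DF) (hFcont : ContinuousOn F DF)
    (D : Set (StrongDual ℝ Xt)) (hD : D = DF ∩ Set.range G)
    (hDne : D.Nonempty)
    (r : ℝ) (hr : 0 < r)
    (ubar : StrongDual ℝ Xt) (hubar : ubar ∈ Set.range G)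
    (α : ℝ) (hα : 0 < α) (fδ : Y)
    (T : StrongDual ℝ Xt → ℝ)
    (hT : ∀ u ∈ D, ∀ v : StrongDual ℝ Xt, G v = u - ubar →
      T u = ‖F u - fδ‖ ^ r + α * ‖v‖ ^ r)
    (un : ℕ → StrongDual ℝ Xt) (hun : ∀ n, un n ∈ D)
    (hmin : Tendsto (fun n => T (un n)) atTop (𝓝 (sInf (T '' D)))) :
    ∃ φ : ℕ → ℕ, StrictMono φ ∧ ∃ uhat ∈ D,
      Tendsto (fun k => ‖un (φ k) - uhat‖) atTop (𝓝 0) ∧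
      T uhat = sInf (T '' D) :=
  tikhonov_minimizing_sequence_subconverges_general Xt Y Gt hGtcompact G hGadj F DF hDFclosed hFcont
    D hD r hr ubar hubar α hα fδ T hT un hun hmin
end

section
/- Regularized solutions are stable in the norm of X with respect to perturbations of the data: if (f_n) ⊆ Y satisfies ‖f_n − f^δ‖ → 0 and for each n the element u_n ∈ D is a minimizer over D of u ↦ ‖F(u) − f_n‖^r + α‖G^{-1}(u − ū)‖^r, then (u_n) is a minimizing sequence for T_α^δ and possesses a subsequence converging in the norm of X to a minimizer of T_α^δ over D. -/
/-!
Along the minimizers `u_n` the Tikhonov values are bounded, so the data-fit terms for `f_n` and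
for `f^δ` differ by `o(1)` (uniform continuity of `t ↦ t ^ r` on bounded sets); comparing with an
arbitrary competitor then shows that `(u_n)` is a minimizing sequence for `T_α^δ`.

Bounded Tikhonov values also bound the preimages `v_n = G⁻¹ (u_n - ū)`, which by the sequential
Banach–Alaoglu theorem have a weak-* convergent subsequence `v_{φ k} → w`. On the compact closure
of the image of the unit ball under `G̃` a bounded (hence equicontinuous) pointwise convergent
sequence of functionals converges uniformly, so `G v_{φ k} → G w` in norm and
`u_{φ k} → û := ū + G w`. Closedness of `D(F)`, continuity of `F` and weak-* lower semicontinuity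
of the norm make `û` a minimizer.
-/

open Filter Set Topology

section Dual

variable {E : Type*} [NormedAddCommGroup E] [NormedSpace ℝ E]

namespace StrongDual

theorem exists_subseq_tendsto_apply_s2 [TopologicalSpace.SeparableSpace E]
    {v : ℕ → StrongDual ℝ E} {C : ℝ} (hC : ∀ n, ‖v n‖ ≤ C) :
    ∃ w : StrongDual ℝ E, ∃ φ : ℕ → ℕ, StrictMono φ ∧
      ∀ x, Tendsto (fun k => v (φ k) x) atTop (𝓝 (w x)) := by
  obtain ⟨w, -, φ, hφ, hw⟩ := WeakDual.isSeqCompact_closedBall ℝ E 0 C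
    (x := fun n => StrongDual.toWeakDual (v n)) fun n => by simpa using hC n
  exact ⟨WeakDual.toStrongDual w, φ, hφ, fun x =>
    (WeakDual.eval_continuous x).continuousAt.tendsto.comp hw⟩

theorem norm_le_of_tendsto_apply {v : ℕ → StrongDual ℝ E} {w : StrongDual ℝ E} {L : ℝ}
    (hv : ∀ x, Tendsto (fun k => v k x) atTop (𝓝 (w x)))
    (hL : Tendsto (fun k => ‖v k‖) atTop (𝓝 L)) : ‖w‖ ≤ L :=
  w.opNorm_le_bound (ge_of_tendsto' hL fun _ => norm_nonneg _) fun x =>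
    le_of_tendsto_of_tendsto' (hv x).norm (hL.mul_const ‖x‖) fun k => (v k).le_opNorm x

theorem tendstoUniformlyOn_of_tendsto_apply {v : ℕ → StrongDual ℝ E} {w : StrongDual ℝ E}
    {C : ℝ} (hC : ∀ n, ‖v n‖ ≤ C) {K : Set E} (hK : IsCompact K)
    (hv : ∀ x, Tendsto (fun k => v k x) atTop (𝓝 (w x))) :
    TendstoUniformlyOn (fun n => ⇑(v n)) w atTop K := by
  have hlip (n : ℕ) : LipschitzWith C.toNNReal (v n) :=
    (v n).lipschitz.weaken (NNReal.le_toNNReal_of_coe_le (hC n))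
  have hequi : EquicontinuousOn (fun n => ⇑(v n)) K :=
    (LipschitzWith.uniformEquicontinuous _ _ hlip).equicontinuous.equicontinuousOn K
  have hunif := (EquicontinuousOn.tendsto_uniformOnFun_iff_pi' (𝔖 := {K})
    (by rintro _ rfl; exact hK) (by rintro _ rfl; exact hequi) atTop w).2
    (tendsto_pi_nhds.2 fun x => hv x)
  exact UniformOnFun.tendsto_iff_tendstoUniformlyOn.1 hunif K rfl

end StrongDual

theorem IsCompactOperator.tendsto_comp_of_tendsto_apply_s2 {Z : Type*} [NormedAddCommGroup Z]
    [NormedSpace ℝ Z] {Gt : Z →L[ℝ] E} (hGt : IsCompactOperator Gt)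
    {v : ℕ → StrongDual ℝ E} {w : StrongDual ℝ E} {C : ℝ} (hC : ∀ n, ‖v n‖ ≤ C)
    (hv : ∀ x, Tendsto (fun k => v k x) atTop (𝓝 (w x))) :
    Tendsto (fun n => (v n).comp Gt) atTop (𝓝 (w.comp Gt)) := by
  obtain ⟨K, hK, hGtK⟩ := hGt.image_closedBall_subset_compact (f := (Gt : Z →ₗ[ℝ] E)) 1
  rw [Metric.nhds_basis_closedBall.tendsto_right_iff]
  intro ε hε
  filter_upwards [Metric.tendstoUniformlyOn_iff.1
    (StrongDual.tendstoUniformlyOn_of_tendsto_apply hC hK hv) ε hε] with n hn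
  rw [Metric.mem_closedBall, dist_eq_norm, ← ContinuousLinearMap.sub_comp]
  refine ContinuousLinearMap.opNorm_le_of_unit_norm hε.le fun x hx => ?_
  have hGtx := hn (Gt x) (hGtK ⟨x, by simp [hx], rfl⟩)
  rw [dist_comm, dist_eq_norm] at hGtx
  simpa using hGtx.le

theorem IsCompactOperator.exists_subseq_tendsto_comp [TopologicalSpace.SeparableSpace E]
    {Z : Type*} [NormedAddCommGroup Z] [NormedSpace ℝ Z] {Gt : Z →L[ℝ] E}
    (hGt : IsCompactOperator Gt) {v : ℕ → StrongDual ℝ E} {C : ℝ} (hC : ∀ n, ‖v n‖ ≤ C) :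
    ∃ φ : ℕ → ℕ, StrictMono φ ∧ ∃ w : StrongDual ℝ E, ∃ L : ℝ, ‖w‖ ≤ L ∧
      Tendsto (fun k => ‖v (φ k)‖) atTop (𝓝 L) ∧
      Tendsto (fun k => (v (φ k)).comp Gt) atTop (𝓝 (w.comp Gt)) := by
  obtain ⟨L, -, φ₁, hφ₁, hL⟩ :=
    tendsto_subseq_of_bounded (Metric.isBounded_Icc 0 C) fun n => ⟨norm_nonneg (v n), hC n⟩
  obtain ⟨w, φ₂, hφ₂, hw⟩ := StrongDual.exists_subseq_tendsto_apply_s2 fun k => hC (φ₁ k)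
  have hL₂ : Tendsto (fun k => ‖v (φ₁ (φ₂ k))‖) atTop (𝓝 L) := hL.comp hφ₂.tendsto_atTop
  exact ⟨φ₁ ∘ φ₂, hφ₁.comp hφ₂, w, L, StrongDual.norm_le_of_tendsto_apply hw hL₂, hL₂,
    hGt.tendsto_comp_of_tendsto_apply_s2 (fun k => hC _) hw⟩

end Dual

theorem Continuous.tendsto_dist_comp {ι α β : Type*} [PseudoMetricSpace α] [ProperSpace α]
    [PseudoMetricSpace β] {f : α → β} (hf : Continuous f) {l : Filter ι} {a b : ι → α}
    (ha : Bornology.IsBounded (range a)) (hab : Tendsto (fun i => dist (a i) (b i)) l (𝓝 0)) :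
    Tendsto (fun i => dist (f (a i)) (f (b i))) l (𝓝 0) := by
  set S := Metric.cthickening 1 (range a)
  have hS : IsCompact S := ha.cthickening.isCompact_closure.of_isClosed_subset
    Metric.isClosed_cthickening subset_closure
  have hb : ∀ᶠ i in l, b i ∈ S := (hab.eventually_le_const one_pos).mono fun i hi =>
    Metric.mem_cthickening_of_dist_le (b i) (a i) 1 _ (mem_range_self i) (by rwa [dist_comm])
  have hab' : Tendsto (fun i => (a i, b i)) l (uniformity α ⊓ 𝓟 (S ×ˢ S)) :=
    tendsto_inf.2 ⟨tendsto_uniformity_iff_dist_tendsto_zero.2 hab, tendsto_principal.2 <|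
      hb.mono fun i hi => ⟨Metric.self_subset_cthickening _ (mem_range_self i), hi⟩⟩
  exact tendsto_uniformity_iff_dist_tendsto_zero.1
    (Tendsto.comp (hS.uniformContinuousOn_of_continuous hf.continuousOn) hab')

theorem tendsto_sInf_image_of_minimizers {ι : Type*} {J : ι → ℝ} {Jn : ℕ → ι → ℝ} {D : Set ι}
    {u : ℕ → ι} (hJ : BddBelow (J '' D)) (hu : ∀ n, u n ∈ D)
    (hmin : ∀ n, ∀ x ∈ D, Jn n (u n) ≤ Jn n x)
    (hconv : ∀ x ∈ D, Tendsto (fun n => Jn n x) atTop (𝓝 (J x)))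
    (hgap : Tendsto (fun n => dist (J (u n)) (Jn n (u n))) atTop (𝓝 0)) :
    Tendsto (fun n => J (u n)) atTop (𝓝 (sInf (J '' D))) := by
  refine tendsto_order.2 ⟨fun a ha => Eventually.of_forall fun n =>
    ha.trans_le (csInf_le hJ (mem_image_of_mem J (hu n))), fun a ha => ?_⟩
  obtain ⟨_, ⟨x, hx, rfl⟩, hxa⟩ := exists_lt_of_csInf_lt ⟨_, mem_image_of_mem J (hu 0)⟩ ha
  have hε : 0 < (a - J x) / 2 := by linarith
  filter_upwards [(hconv x hx).eventually_lt_const (lt_add_of_pos_right _ hε),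
    hgap.eventually_lt_const hε] with n hJn hdist
  have hJu_lt := (abs_lt.1 (Real.dist_eq _ _ ▸ hdist)).2
  linarith [hmin n x hx]

theorem Real.bddAbove_range_of_rpow {ι : Type*} {a : ι → ℝ} (ha : ∀ i, 0 ≤ a i) {r : ℝ}
    (hr : 0 < r) (h : BddAbove (range fun i => a i ^ r)) : BddAbove (range a) := by
  obtain ⟨B, hB⟩ := h
  refine ⟨B ^ r⁻¹, forall_mem_range.2 fun i => ?_⟩
  have hi : a i ^ r ≤ B := hB (mem_range_self i)
  exact (Real.le_rpow_inv_iff_of_pos (ha i) ((Real.rpow_nonneg (ha i) r).trans hi) hr).2 hi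

theorem sub_mem_range {𝓕 M N : Type*} [AddGroup M] [AddGroup N] [FunLike 𝓕 M N]
    [AddMonoidHomClass 𝓕 M N] (G : 𝓕) {a b : N} (ha : a ∈ range G) (hb : b ∈ range G) :
    a - b ∈ range G := by
  obtain ⟨x, rfl⟩ := ha
  obtain ⟨y, rfl⟩ := hb
  exact ⟨x - y, map_sub G x y⟩

section Tikhonov

variable {ι Y : Type*} [SeminormedAddCommGroup Y] {F : ι → Y} {R : ι → ℝ} {D : Set ι} {r : ℝ}
  {f : Y}

theorem bddBelow_image_of_eq_rpow_add {J : ι → ℝ} (hR : ∀ u ∈ D, 0 ≤ R u)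
    (hJ : ∀ u ∈ D, J u = ‖F u - f‖ ^ r + R u) : BddBelow (J '' D) := by
  refine ⟨0, forall_mem_image.2 fun u hu => ?_⟩
  rw [hJ u hu]
  exact add_nonneg (Real.rpow_nonneg (norm_nonneg _) r) (hR u hu)

theorem tendsto_sInf_image_of_minimizers_of_tendsto_data {T : Y → ι → ℝ} (hR : ∀ u ∈ D, 0 ≤ R u)
    (hr : 0 < r) (hT : ∀ f, ∀ u ∈ D, T f u = ‖F u - f‖ ^ r + R u) {fn : ℕ → Y}
    (hfn : Tendsto fn atTop (𝓝 f)) {un : ℕ → ι} (hun : ∀ n, un n ∈ D)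
    (hmin : ∀ n, ∀ u ∈ D, T (fn n) (un n) ≤ T (fn n) u) :
    Tendsto (fun n => T f (un n)) atTop (𝓝 (sInf (T f '' D))) := by
  have hconv (u : ι) (hu : u ∈ D) : Tendsto (fun n => T (fn n) u) atTop (𝓝 (T f u)) := by
    simp only [hT _ u hu]
    exact ((tendsto_const_nhds.sub hfn).norm.rpow_const (Or.inr hr.le)).add_const _
  have hfit : BddAbove (range fun n => ‖F (un n) - fn n‖ ^ r) := by
    obtain ⟨B, hB⟩ := (hconv _ (hun 0)).bddAbove_range
    refine ⟨B, forall_mem_range.2 fun n => ?_⟩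
    have hBn := (hmin n _ (hun 0)).trans (hB (mem_range_self n))
    rw [hT _ _ (hun n)] at hBn
    linarith [hR _ (hun n)]
  have hgap : Tendsto (fun n => dist (T f (un n)) (T (fn n) (un n))) atTop (𝓝 0) := by
    simp only [hT _ _ (hun _), dist_add_right, dist_comm (‖F (un _) - f‖ ^ r)]
    refine (Real.continuous_rpow_const hr.le).tendsto_dist_comp
      (isBounded_iff_bddBelow_bddAbove.2 ⟨⟨0, forall_mem_range.2 fun _ => norm_nonneg _⟩,
        Real.bddAbove_range_of_rpow (fun _ => norm_nonneg _) hr hfit⟩) ?_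
    refine squeeze_zero (fun _ => dist_nonneg) (fun n => ?_) (tendsto_iff_dist_tendsto_zero.1 hfn)
    rw [← dist_sub_left (F (un n))]
    exact (dist_norm_norm_le _ _).trans_eq (dist_eq_norm _ _).symm
  exact tendsto_sInf_image_of_minimizers (bddBelow_image_of_eq_rpow_add hR (hT f)) hun hmin
    hconv hgap

end Tikhonov

theorem exists_subseq_tendsto_minimizer_tikhonov {E Z Y : Type*} [NormedAddCommGroup E]
    [NormedSpace ℝ E] [TopologicalSpace.SeparableSpace E] [NormedAddCommGroup Z] [NormedSpace ℝ Z]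
    [SeminormedAddCommGroup Y] {Gt : Z →L[ℝ] E} (hGt : IsCompactOperator Gt)
    {G : StrongDual ℝ E →L[ℝ] StrongDual ℝ Z} (hG : ∀ φ x, G φ x = φ (Gt x))
    {F : StrongDual ℝ Z → Y} {DF : Set (StrongDual ℝ Z)} (hDF : IsClosed DF)
    (hF : ContinuousOn F DF) {ubar : StrongDual ℝ Z} (hubar : ubar ∈ range G) {r : ℝ}
    (hr : 0 < r) {α : ℝ} (hα : 0 < α) {f : Y} {J : StrongDual ℝ Z → ℝ}
    (hJ : ∀ u ∈ DF ∩ range G, ∀ v, G v = u - ubar → J u = ‖F u - f‖ ^ r + α * ‖v‖ ^ r)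
    {u : ℕ → StrongDual ℝ Z} (hu : ∀ n, u n ∈ DF ∩ range G) {m : ℝ}
    (hJu : Tendsto (fun n => J (u n)) atTop (𝓝 m)) (hm : ∀ u' ∈ DF ∩ range G, m ≤ J u') :
    ∃ φ : ℕ → ℕ, StrictMono φ ∧ ∃ uhat ∈ DF ∩ range G,
      Tendsto (fun k => u (φ k)) atTop (𝓝 uhat) ∧ ∀ u' ∈ DF ∩ range G, J uhat ≤ J u' := by
  choose v hv using fun n => sub_mem_range G (hu n).2 hubar
  have hJv (n : ℕ) : J (u n) = ‖F (u n) - f‖ ^ r + α * ‖v n‖ ^ r := hJ _ (hu n) _ (hv n)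
  obtain ⟨C, hC⟩ : BddAbove (range fun n => ‖v n‖) := by
    refine Real.bddAbove_range_of_rpow (fun _ => norm_nonneg _) hr ?_
    obtain ⟨B, hB⟩ := hJu.bddAbove_range
    refine ⟨B / α, forall_mem_range.2 fun n => (le_div_iff₀' hα).2 ?_⟩
    have hBn := hB (mem_range_self n)
    rw [hJv] at hBn
    linarith [Real.rpow_nonneg (norm_nonneg (F (u n) - f)) r]
  obtain ⟨φ, hφ, w, L, hwL, hL, hGw⟩ :=
    hGt.exists_subseq_tendsto_comp (v := v) fun n => hC (mem_range_self n)
  have hGcomp (ψ : StrongDual ℝ E) : G ψ = ψ.comp Gt := ContinuousLinearMap.ext (hG ψ)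
  set uhat := ubar + G w
  have hconv : Tendsto (fun k => u (φ k)) atTop (𝓝 uhat) := by
    have hsplit (k : ℕ) : u (φ k) = ubar + (v (φ k)).comp Gt := by rw [← hGcomp, hv]; abel
    simp only [hsplit, uhat, hGcomp]
    exact tendsto_const_nhds.add hGw
  have huhat : uhat ∈ DF ∩ range G := by
    refine ⟨hDF.mem_of_tendsto hconv (Eventually.of_forall fun k => (hu (φ k)).1), ?_⟩
    obtain ⟨b, hb⟩ := hubar
    exact ⟨b + w, by rw [map_add, hb]⟩
  have hFconv : Tendsto (fun k => F (u (φ k))) atTop (𝓝 (F uhat)) :=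
    (hF uhat huhat.1).tendsto.comp
      (tendsto_nhdsWithin_iff.2 ⟨hconv, Eventually.of_forall fun k => (hu (φ k)).1⟩)
  have hm_eq : m = ‖F uhat - f‖ ^ r + α * L ^ r := by
    refine tendsto_nhds_unique (hJu.comp hφ.tendsto_atTop) ?_
    simp only [Function.comp_def, hJv]
    exact ((hFconv.sub_const f).norm.rpow_const (Or.inr hr.le)).add
      ((hL.rpow_const (Or.inr hr.le)).const_mul α)
  refine ⟨φ, hφ, uhat, huhat, hconv, fun u' hu' => ?_⟩
  calc J uhat = ‖F uhat - f‖ ^ r + α * ‖w‖ ^ r := hJ _ huhat w (by simp [uhat])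
    _ ≤ m := by rw [hm_eq]; gcongr
    _ ≤ J u' := hm u' hu'

theorem tikhonov_stability_general
    (Xt : Type*) [NormedAddCommGroup Xt] [NormedSpace ℝ Xt]
    [TopologicalSpace.SeparableSpace Xt]
    (Y : Type*) [NormedAddCommGroup Y] [NormedSpace ℝ Y]
    (Gt : Xt →L[ℝ] Xt) (hGtcompact : IsCompactOperator Gt)
    (G : StrongDual ℝ Xt →L[ℝ] StrongDual ℝ Xt)
    (hGadj : ∀ (φ : StrongDual ℝ Xt) (x : Xt), G φ x = φ (Gt x))
    (F : StrongDual ℝ Xt → Y) (DF : Set (StrongDual ℝ Xt))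
    (hDFclosed : IsClosed DF) (hFcont : ContinuousOn F DF)
    (D : Set (StrongDual ℝ Xt)) (hD : D = DF ∩ Set.range G)
    (r : ℝ) (hr : 0 < r)
    (ubar : StrongDual ℝ Xt) (hubar : ubar ∈ Set.range G)
    (α : ℝ) (hα : 0 < α) (fδ : Y)
    -- the Tikhonov functional with general data `f`:
    (T : Y → StrongDual ℝ Xt → ℝ)
    (hT : ∀ (f : Y), ∀ u ∈ D, ∀ v : StrongDual ℝ Xt, G v = u - ubar →
      T f u = ‖F u - f‖ ^ r + α * ‖v‖ ^ r)
    -- the perturbed data and corresponding minimizers: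
    (fn : ℕ → Y) (hfn : Tendsto (fun n => ‖fn n - fδ‖) atTop (𝓝 0))
    (un : ℕ → StrongDual ℝ Xt) (hunD : ∀ n, un n ∈ D)
    (hunmin : ∀ n, ∀ u' ∈ D, T (fn n) (un n) ≤ T (fn n) u') :
    Tendsto (fun n => T fδ (un n)) atTop (𝓝 (sInf (T fδ '' D))) ∧
    ∃ φ : ℕ → ℕ, StrictMono φ ∧ ∃ uhat ∈ D,
      Tendsto (fun k => ‖un (φ k) - uhat‖) atTop (𝓝 0) ∧
      ∀ u' ∈ D, T fδ uhat ≤ T fδ u' := by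
  subst hD
  set R : StrongDual ℝ Xt → ℝ := fun u => α * ‖Function.invFun G (u - ubar)‖ ^ r
  have hTR (f : Y) (u : StrongDual ℝ Xt) (hu : u ∈ DF ∩ range G) :
      T f u = ‖F u - f‖ ^ r + R u :=
    hT f u hu _ (Function.invFun_eq (sub_mem_range G hu.2 hubar))
  have hR (u : StrongDual ℝ Xt) (_ : u ∈ DF ∩ range G) : 0 ≤ R u := by positivity
  have hminimizing := tendsto_sInf_image_of_minimizers_of_tendsto_data hR hr hTR
    (tendsto_iff_norm_sub_tendsto_zero.2 hfn) hunD hunmin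
  obtain ⟨φ, hφ, uhat, huhat, hconv, hopt⟩ := exists_subseq_tendsto_minimizer_tikhonov
    hGtcompact hGadj hDFclosed hFcont hubar hr hα (hT fδ) hunD hminimizing
    fun u' hu' => csInf_le (bddBelow_image_of_eq_rpow_add hR (hTR fδ)) (mem_image_of_mem _ hu')
  exact ⟨hminimizing, φ, hφ, uhat, huhat, tendsto_iff_norm_sub_tendsto_zero.1 hconv, hopt⟩

/-- Stability of regularized solutions with respect to data perturbations:
if `f_n → f^δ` and `u_n` minimizes the Tikhonov functional with data `f_n`,
then `(u_n)` is a minimizing sequence for `T_α^δ` and has a subsequence converging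
in norm to a minimizer of `T_α^δ`. -/
theorem tikhonov_stability
    (Xt : Type*) [NormedAddCommGroup Xt] [NormedSpace ℝ Xt] [CompleteSpace Xt]
    [TopologicalSpace.SeparableSpace Xt]
    (Y : Type*) [NormedAddCommGroup Y] [NormedSpace ℝ Y]
    (Gt : Xt →L[ℝ] Xt) (hGtcompact : IsCompactOperator Gt)
    (G : StrongDual ℝ Xt →L[ℝ] StrongDual ℝ Xt)
    (hGadj : ∀ (φ : StrongDual ℝ Xt) (x : Xt), G φ x = φ (Gt x))
    (hGinj : Function.Injective G)
    (F : StrongDual ℝ Xt → Y) (DF : Set (StrongDual ℝ Xt))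
    (hDFclosed : IsClosed DF) (hFcont : ContinuousOn F DF)
    (D : Set (StrongDual ℝ Xt)) (hD : D = DF ∩ Set.range G)
    (hDne : D.Nonempty)
    (r : ℝ) (hr : 0 < r)
    (ubar : StrongDual ℝ Xt) (hubar : ubar ∈ Set.range G)
    (α : ℝ) (hα : 0 < α) (fδ : Y)
    -- the Tikhonov functional with general data `f`:
    (T : Y → StrongDual ℝ Xt → ℝ)
    (hT : ∀ (f : Y), ∀ u ∈ D, ∀ v : StrongDual ℝ Xt, G v = u - ubar →
      T f u = ‖F u - f‖ ^ r + α * ‖v‖ ^ r)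
    -- the perturbed data and corresponding minimizers:
    (fn : ℕ → Y) (hfn : Tendsto (fun n => ‖fn n - fδ‖) atTop (𝓝 0))
    (un : ℕ → StrongDual ℝ Xt) (hunD : ∀ n, un n ∈ D)
    (hunmin : ∀ n, ∀ u' ∈ D, T (fn n) (un n) ≤ T (fn n) u') :
    Tendsto (fun n => T fδ (un n)) atTop (𝓝 (sInf (T fδ '' D))) ∧
    ∃ φ : ℕ → ℕ, StrictMono φ ∧ ∃ uhat ∈ D,
      Tendsto (fun k => ‖un (φ k) - uhat‖) atTop (𝓝 0) ∧
      ∀ u' ∈ D, T fδ uhat ≤ T fδ u' :=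
  tikhonov_stability_general Xt Y Gt hGtcompact G hGadj F DF hDFclosed hFcont D hD r hr ubar hubar α
    hα fδ T hT fn hfn un hunD hunmin
end

section
/- Let R_β, β > 0, be a family of bounded linear operators on X satisfying ‖R_β‖ ≤ c*/β and ‖I − R_β G‖ ≤ c₀ for all β > 0, and R_β G = G R_β for all β > 0. Fix p ∈ (0,1] and let A : X → X be a bounded linear operator that commutes with every R_β and satisfies the interpolation estimate ‖Aw‖ ≤ κ₁ ‖Gw‖^p ‖w‖^{1−p} for all w ∈ X. Then for all β > 0 one has the operator-norm bound ‖R_β A‖ ≤ κ₁ (c₀ + 1)^p c*^{1−p} β^{p−1}. -/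
/-!
Commuting `A` past `R_β`, the interpolation estimate applied to `R_β w` bounds `‖A R_β w‖` by
`κ₁ ‖G R_β w‖^p ‖R_β w‖^{1-p}`. Writing `G R_β w = w - (I - R_β G) w` gives
`‖G R_β w‖ ≤ (c₀ + 1) ‖w‖`, while `‖R_β w‖ ≤ (c*/β) ‖w‖`; the powers of `‖w‖` add up to one.
-/

lemma Real.mul_rpow_mul_mul_rpow_one_sub {x y t : ℝ} (hx : 0 ≤ x) (hy : 0 ≤ y) (ht : 0 ≤ t)
    (p : ℝ) : (x * t) ^ p * (y * t) ^ (1 - p) = x ^ p * y ^ (1 - p) * t := by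
  have ht_pow : t ^ p * t ^ (1 - p) = t := by
    rw [← Real.rpow_add' ht (by simp), add_sub_cancel, Real.rpow_one]
  rw [Real.mul_rpow hx ht, Real.mul_rpow hy ht]
  linear_combination x ^ p * y ^ (1 - p) * ht_pow

namespace ContinuousLinearMap

variable {X : Type*} [NormedAddCommGroup X] [NormedSpace ℝ X]

lemma norm_apply_apply_le_of_norm_id_sub_comp_le {R G : X →L[ℝ] X} {c : ℝ}
    (hS : ‖ContinuousLinearMap.id ℝ X - R.comp G‖ ≤ c) (hcomm : R.comp G = G.comp R) (w : X) :
    ‖G (R w)‖ ≤ (c + 1) * ‖w‖ := by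
  have hGR : G (R w) = w - (ContinuousLinearMap.id ℝ X - R.comp G) w := by simp [hcomm]
  calc ‖G (R w)‖ ≤ ‖w‖ + ‖(ContinuousLinearMap.id ℝ X - R.comp G) w‖ := hGR ▸ norm_sub_le _ _
    _ ≤ ‖w‖ + c * ‖w‖ := by gcongr; exact le_of_opNorm_le _ hS w
    _ = (c + 1) * ‖w‖ := by ring

lemma norm_comp_le_of_interpolation {R G A : X →L[ℝ] X} {r c κ p : ℝ}
    (hκ : 0 ≤ κ) (hp0 : 0 ≤ p) (hp1 : p ≤ 1)
    (hR : ‖R‖ ≤ r) (hS : ‖ContinuousLinearMap.id ℝ X - R.comp G‖ ≤ c) (hcomm : R.comp G = G.comp R)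
    (hAcomm : R.comp A = A.comp R)
    (hinterp : ∀ w : X, ‖A w‖ ≤ κ * ‖G w‖ ^ p * ‖w‖ ^ (1 - p)) :
    ‖R.comp A‖ ≤ κ * (c + 1) ^ p * r ^ (1 - p) := by
  have hr : 0 ≤ r := (norm_nonneg R).trans hR
  have hc : 0 ≤ c + 1 := by linarith [(norm_nonneg _).trans hS]
  refine opNorm_le_bound _ (by positivity) fun w => ?_
  rw [hAcomm, comp_apply]
  have hGR := norm_apply_apply_le_of_norm_id_sub_comp_le hS hcomm w
  have hRw : ‖R w‖ ≤ r * ‖w‖ := le_of_opNorm_le R hR w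
  calc ‖A (R w)‖ ≤ κ * ‖G (R w)‖ ^ p * ‖R w‖ ^ (1 - p) := hinterp (R w)
    _ ≤ κ * ((c + 1) * ‖w‖) ^ p * (r * ‖w‖) ^ (1 - p) := by
      gcongr
    _ = κ * (c + 1) ^ p * r ^ (1 - p) * ‖w‖ := by
      rw [mul_assoc κ, Real.mul_rpow_mul_mul_rpow_one_sub hc hr (norm_nonneg w)]
      ring

end ContinuousLinearMap

theorem norm_Rbeta_comp_A_bound_general
    (X : Type*) [NormedAddCommGroup X] [NormedSpace ℝ X]
    (G : X →L[ℝ] X)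
    (cstar c₀ κ₁ : ℝ) (hcstar : 0 < cstar) (hκ₁ : 0 < κ₁)
    (R : ℝ → (X →L[ℝ] X))
    (hR : ∀ β : ℝ, 0 < β → ‖R β‖ ≤ cstar / β)
    (hS : ∀ β : ℝ, 0 < β → ‖ContinuousLinearMap.id ℝ X - (R β).comp G‖ ≤ c₀)
    (hcomm : ∀ β : ℝ, 0 < β → (R β).comp G = G.comp (R β))
    (p : ℝ) (hp : 0 < p) (hp1 : p ≤ 1)
    (A : X →L[ℝ] X)
    (hAcomm : ∀ β : ℝ, 0 < β → (R β).comp A = A.comp (R β))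
    (hinterp : ∀ w : X, ‖A w‖ ≤ κ₁ * ‖G w‖ ^ p * ‖w‖ ^ (1 - p)) :
    ∀ β : ℝ, 0 < β →
      ‖(R β).comp A‖ ≤ κ₁ * (c₀ + 1) ^ p * cstar ^ (1 - p) * β ^ (p - 1) := by
  intro β hβ
  have hβ_pow : (cstar / β) ^ (1 - p) = cstar ^ (1 - p) * β ^ (p - 1) := by
    rw [Real.div_rpow hcstar.le hβ.le, div_eq_mul_inv, ← Real.rpow_neg hβ.le, neg_sub]
  calc ‖(R β).comp A‖ ≤ κ₁ * (c₀ + 1) ^ p * (cstar / β) ^ (1 - p) :=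
        ContinuousLinearMap.norm_comp_le_of_interpolation hκ₁.le hp.le hp1 (hR β hβ) (hS β hβ)
          (hcomm β hβ) (hAcomm β hβ) hinterp
    _ = κ₁ * (c₀ + 1) ^ p * cstar ^ (1 - p) * β ^ (p - 1) := by rw [hβ_pow]; ring

/-- Lemma 5.1 (generalized): if `‖R_β‖ ≤ c*/β`, `‖I − R_β G‖ ≤ c₀`, `R_β G = G R_β`,
and `A` commutes with every `R_β` and satisfies the interpolation estimate
`‖Aw‖ ≤ κ₁‖Gw‖^p‖w‖^{1−p}`, then `‖R_β A‖ ≤ κ₁ (c₀+1)^p c*^{1−p} β^{p−1}` for `β > 0`. -/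
theorem norm_Rbeta_comp_A_bound
    (X : Type*) [NormedAddCommGroup X] [NormedSpace ℝ X]
    (G : X →L[ℝ] X)
    (cstar c₀ κ₁ : ℝ) (hcstar : 0 < cstar) (hc₀ : 0 < c₀) (hκ₁ : 0 < κ₁)
    (R : ℝ → (X →L[ℝ] X))
    (hR : ∀ β : ℝ, 0 < β → ‖R β‖ ≤ cstar / β)
    (hS : ∀ β : ℝ, 0 < β → ‖ContinuousLinearMap.id ℝ X - (R β).comp G‖ ≤ c₀)
    (hcomm : ∀ β : ℝ, 0 < β → (R β).comp G = G.comp (R β))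
    (p : ℝ) (hp : 0 < p) (hp1 : p ≤ 1)
    (A : X →L[ℝ] X)
    (hAcomm : ∀ β : ℝ, 0 < β → (R β).comp A = A.comp (R β))
    (hinterp : ∀ w : X, ‖A w‖ ≤ κ₁ * ‖G w‖ ^ p * ‖w‖ ^ (1 - p)) :
    ∀ β : ℝ, 0 < β →
      ‖(R β).comp A‖ ≤ κ₁ * (c₀ + 1) ^ p * cstar ^ (1 - p) * β ^ (p - 1) :=
  norm_Rbeta_comp_A_bound_general X G cstar c₀ κ₁ hcstar hκ₁ R hR hS hcomm p hp hp1 A hAcomm hinterp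
end

section
/- Suppose λ > ω, w ∈ X, and set u := ∫₀^∞ e^{−λq} T(q) w dq (a convergent Bochner integral). Then for every p with 0 ≤ p < p₀ there exists a finite constant C' > 0 such that ‖S_β(T(p)u)‖ ≤ C' β^p / log(1/β) for all β ∈ (0,1). -/
open Filter Set Topology MeasureTheory

/-! Write `S_β T(p) u = ∫₀^∞ e^{-λq} S_β T(p+q) w dq` and put `δ = p₀ - p`. For `q ≤ δ` the
smoothing bound gives `‖S_β T(p+q)‖ ≤ c β^p β^q`; for `q > δ`, `T(p+q) = T(p₀) T(p+q-p₀)` gives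
`c β^p β^δ C e^{ωq}`. Integrating against `e^{-λq}`, the first term contributes
`β^p / (λ + log(1/β)) ≤ β^p / log(1/β)` and the second `β^p β^δ / (λ - ω)`, where
`β^δ = e^{-δ log(1/β)} ≤ e^{-1} / (δ log(1/β))` because `t e^{-t} ≤ e^{-1}`. -/

lemma Real.rpow_le_exp_neg_one_div_mul_log {β δ : ℝ} (hβ : 0 < β) (hβ₁ : β < 1) (hδ : 0 < δ) :
    β ^ δ ≤ Real.exp (-1) / (δ * Real.log (1 / β)) := by
  have hL : 0 < Real.log (1 / β) := Real.log_pos (one_lt_one_div hβ hβ₁)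
  have hβδ : β ^ δ = Real.exp (-(δ * Real.log (1 / β))) := by
    rw [Real.rpow_def_of_pos hβ, one_div, Real.log_inv]
    ring_nf
  rw [hβδ, le_div_iff₀ (by positivity), mul_comm]
  exact Real.mul_exp_neg_le_exp_neg_one _

lemma norm_integral_exp_smul_le_of_norm_le_rpow_add_exp {E : Type*} [NormedAddCommGroup E]
    [NormedSpace ℝ E] {f : ℝ → E} {lam β ω M K : ℝ} (hβ : 0 < β) (hβlam : Real.log β < lam)
    (hωlam : ω < lam) (hf : ∀ q ∈ Ioi (0 : ℝ), ‖f q‖ ≤ M * (β ^ q + K * Real.exp (ω * q))) :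
    ‖∫ q in Ioi (0 : ℝ), Real.exp (-lam * q) • f q‖ ≤
      M * (1 / (lam - Real.log β) + K / (lam - ω)) := by
  have hexp : ∀ q, Real.exp (-lam * q) * (M * (β ^ q + K * Real.exp (ω * q))) =
      M * (Real.exp ((Real.log β - lam) * q) + K * Real.exp ((ω - lam) * q)) := by
    intro q
    rw [Real.rpow_def_of_pos hβ, sub_mul, sub_mul, sub_eq_add_neg, sub_eq_add_neg,
      Real.exp_add, Real.exp_add, ← neg_mul]
    ring
  have hint₁ := integrableOn_exp_mul_Ioi (sub_neg.2 hβlam) 0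
  have hint₂ := integrableOn_exp_mul_Ioi (sub_neg.2 hωlam) 0
  calc ‖∫ q in Ioi (0 : ℝ), Real.exp (-lam * q) • f q‖
      ≤ ∫ q in Ioi (0 : ℝ), M * (Real.exp ((Real.log β - lam) * q) +
          K * Real.exp ((ω - lam) * q)) := by
        refine norm_integral_le_of_norm_le ((hint₁.add (hint₂.const_mul K)).const_mul M) ?_
        filter_upwards [self_mem_ae_restrict measurableSet_Ioi] with q hq
        rw [norm_smul, Real.norm_of_nonneg (Real.exp_pos _).le, ← hexp]
        exact mul_le_mul_of_nonneg_left (hf q hq) (Real.exp_pos _).le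
    _ = M * (1 / (lam - Real.log β) + K / (lam - ω)) := by
        rw [integral_const_mul, integral_add hint₁ (hint₂.const_mul K), integral_const_mul,
          integral_exp_mul_Ioi (sub_neg.2 hβlam), integral_exp_mul_Ioi (sub_neg.2 hωlam)]
        simp only [mul_zero, Real.exp_zero, neg_div, ← div_neg, neg_sub, mul_one_div]

section Semigroup

variable {X : Type*} [NormedAddCommGroup X] [NormedSpace ℝ X] {T : ℝ → X →L[ℝ] X}
  {S : X →L[ℝ] X} {C ω c β p₀ : ℝ}

lemma norm_comp_semigroup_le_rpow_add_exp
    (hTadd : ∀ q₁ q₂ : ℝ, 0 ≤ q₁ → 0 ≤ q₂ → T (q₁ + q₂) = (T q₁).comp (T q₂))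
    (hTbound : ∀ q : ℝ, 0 ≤ q → ‖T q‖ ≤ C * Real.exp (ω * q))
    (hS : ∀ q ∈ Icc (0 : ℝ) p₀, ‖S.comp (T q)‖ ≤ c * β ^ q)
    (hC : 0 ≤ C) (hω : 0 ≤ ω) (hc : 0 ≤ c) (hβ : 0 < β) {p q : ℝ} (hp : 0 ≤ p) (hpp₀ : p ≤ p₀)
    (hq : 0 ≤ q) :
    ‖S.comp (T (p + q))‖ ≤ c * β ^ p * (β ^ q + C * β ^ (p₀ - p) * Real.exp (ω * q)) := by
  rcases le_or_gt q (p₀ - p) with hqδ | hqδ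
  · calc ‖S.comp (T (p + q))‖ ≤ c * β ^ (p + q) := hS _ ⟨by linarith, by linarith⟩
      _ = c * β ^ p * β ^ q := by rw [Real.rpow_add hβ, mul_assoc]
      _ ≤ c * β ^ p * (β ^ q + C * β ^ (p₀ - p) * Real.exp (ω * q)) := by
        gcongr
        exact le_add_of_nonneg_right (by positivity)
  · have hsplit : T (p + q) = (T p₀).comp (T (p + q - p₀)) := by
      rw [← hTadd _ _ (by linarith) (by linarith), add_sub_cancel]
    have hgrowth : Real.exp (ω * (p + q - p₀)) ≤ Real.exp (ω * q) :=
      Real.exp_le_exp.2 (mul_le_mul_of_nonneg_left (by linarith) hω)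
    have hS₀ := hS p₀ ⟨by linarith, le_rfl⟩
    calc ‖S.comp (T (p + q))‖ ≤ ‖S.comp (T p₀)‖ * ‖T (p + q - p₀)‖ := by
          rw [hsplit, ← ContinuousLinearMap.comp_assoc]
          exact ContinuousLinearMap.opNorm_comp_le _ _
      _ ≤ c * β ^ p₀ * (C * Real.exp (ω * q)) :=
          mul_le_mul hS₀ ((hTbound _ (by linarith)).trans (mul_le_mul_of_nonneg_left hgrowth hC))
            (norm_nonneg _) ((norm_nonneg _).trans hS₀)
      _ = c * β ^ p * (C * β ^ (p₀ - p) * Real.exp (ω * q)) := by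
          rw [← add_sub_cancel p p₀, Real.rpow_add hβ, add_sub_cancel_left]
          ring
      _ ≤ c * β ^ p * (β ^ q + C * β ^ (p₀ - p) * Real.exp (ω * q)) := by
          gcongr
          exact le_add_of_nonneg_left (by positivity)

lemma comp_semigroup_apply_integral_exp_smul [CompleteSpace X]
    (hTadd : ∀ q₁ q₂ : ℝ, 0 ≤ q₁ → 0 ≤ q₂ → T (q₁ + q₂) = (T q₁).comp (T q₂)) {lam p : ℝ}
    (hp : 0 ≤ p) {w : X}
    (hint : IntegrableOn (fun q => Real.exp (-lam * q) • T q w) (Ioi (0 : ℝ))) :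
    S (T p (∫ q in Ioi (0 : ℝ), Real.exp (-lam * q) • T q w)) =
      ∫ q in Ioi (0 : ℝ), Real.exp (-lam * q) • S.comp (T (p + q)) w := by
  change S.comp (T p) _ = _
  rw [← (S.comp (T p)).integral_comp_comm hint]
  refine setIntegral_congr_fun measurableSet_Ioi fun q hq => ?_
  simp [hTadd p q hp hq.le]

end Semigroup

theorem low_order_rate_Sbeta_general
    (X : Type*) [NormedAddCommGroup X] [NormedSpace ℝ X] [CompleteSpace X]
    (T : ℝ → (X →L[ℝ] X))
    (hTadd : ∀ q₁ q₂ : ℝ, 0 ≤ q₁ → 0 ≤ q₂ → T (q₁ + q₂) = (T q₁).comp (T q₂))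
    (C ω : ℝ) (hC : 0 < C) (hω : 0 < ω)
    (hTbound : ∀ q : ℝ, 0 ≤ q → ‖T q‖ ≤ C * Real.exp (ω * q))
    (p₀ c : ℝ) (hc : 0 < c)
    (S : ℝ → (X →L[ℝ] X))
    (hS : ∀ β ∈ Set.Ioo (0:ℝ) 1, ∀ q ∈ Set.Icc (0:ℝ) p₀, ‖(S β).comp (T q)‖ ≤ c * β ^ q)
    (lam : ℝ) (hlam : ω < lam) (w : X)
    (hint : IntegrableOn (fun q => Real.exp (-lam * q) • T q w) (Set.Ioi (0:ℝ)))
    (u : X) (hu : u = ∫ q in Set.Ioi (0:ℝ), Real.exp (-lam * q) • T q w) :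
    ∀ p : ℝ, 0 ≤ p → p < p₀ →
      ∃ C' > 0, ∀ β ∈ Set.Ioo (0:ℝ) 1,
        ‖S β (T p u)‖ ≤ C' * β ^ p / Real.log (1 / β) := by
  intro p hp hpp₀
  have hδ : 0 < p₀ - p := sub_pos.2 hpp₀
  set K := c * ‖w‖ * (1 + C * Real.exp (-1) / ((lam - ω) * (p₀ - p))) with hK
  refine ⟨K + 1, by positivity, ?_⟩
  rintro β ⟨hβ₀, hβ₁⟩
  have hL : 0 < Real.log (1 / β) := Real.log_pos (one_lt_one_div hβ₀ hβ₁)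
  have hlogβ : Real.log β = -Real.log (1 / β) := by rw [one_div, Real.log_inv, neg_neg]
  have hpointwise : ∀ q ∈ Ioi (0 : ℝ), ‖(S β).comp (T (p + q)) w‖ ≤
      c * ‖w‖ * β ^ p * (β ^ q + C * β ^ (p₀ - p) * Real.exp (ω * q)) := fun q hq =>
    ((S β).comp (T (p + q))).le_of_opNorm_le (norm_comp_semigroup_le_rpow_add_exp hTadd hTbound
      (hS β ⟨hβ₀, hβ₁⟩) hC.le hω.le hc.le hβ₀ hp hpp₀.le hq.le) w |>.trans_eq (by ring)
  have hβδ := Real.rpow_le_exp_neg_one_div_mul_log hβ₀ hβ₁ hδ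
  rw [hu, comp_semigroup_apply_integral_exp_smul hTadd hp hint]
  calc _ ≤ c * ‖w‖ * β ^ p * (1 / (lam - Real.log β) + C * β ^ (p₀ - p) / (lam - ω)) :=
        norm_integral_exp_smul_le_of_norm_le_rpow_add_exp hβ₀ (by linarith) hlam hpointwise
    _ ≤ c * ‖w‖ * β ^ p * (1 / Real.log (1 / β) +
          C * (Real.exp (-1) / ((p₀ - p) * Real.log (1 / β))) / (lam - ω)) := by
        gcongr
        linarith
    _ = K * β ^ p / Real.log (1 / β) := by
        rw [hK]
        field_simp
    _ ≤ (K + 1) * β ^ p / Real.log (1 / β) := by gcongr; linarith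

/-- Lemma 5.2 (low order rate): for a `C₀`-semigroup `(T(q))_{q≥0}` with
`‖T(q)‖ ≤ C e^{ωq}`, companion operators `(S_β)` with `‖S_β T(q)‖ ≤ c β^q` for
`q ∈ [0,p₀]`, and `u = ∫₀^∞ e^{−λq} T(q) w dq` with `λ > ω`, one has, for every
`0 ≤ p < p₀`, a bound `‖S_β(T(p)u)‖ ≤ C' β^p / log(1/β)` for all `β ∈ (0,1)`. -/
theorem low_order_rate_Sbeta
    (X : Type*) [NormedAddCommGroup X] [NormedSpace ℝ X] [CompleteSpace X]
    (T : ℝ → (X →L[ℝ] X))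
    (hT0 : T 0 = ContinuousLinearMap.id ℝ X)
    (hTadd : ∀ q₁ q₂ : ℝ, 0 ≤ q₁ → 0 ≤ q₂ → T (q₁ + q₂) = (T q₁).comp (T q₂))
    (hTcont : ∀ w : X, ContinuousOn (fun q => T q w) (Set.Ici (0:ℝ)))
    (C ω : ℝ) (hC : 0 < C) (hω : 0 < ω)
    (hTbound : ∀ q : ℝ, 0 ≤ q → ‖T q‖ ≤ C * Real.exp (ω * q))
    (p₀ c : ℝ) (hp₀ : 0 < p₀) (hc : 0 < c)
    (S : ℝ → (X →L[ℝ] X))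
    (hS : ∀ β ∈ Set.Ioo (0:ℝ) 1, ∀ q ∈ Set.Icc (0:ℝ) p₀, ‖(S β).comp (T q)‖ ≤ c * β ^ q)
    (lam : ℝ) (hlam : ω < lam) (w : X)
    (hint : IntegrableOn (fun q => Real.exp (-lam * q) • T q w) (Set.Ioi (0:ℝ)))
    (u : X) (hu : u = ∫ q in Set.Ioi (0:ℝ), Real.exp (-lam * q) • T q w) :
    ∀ p : ℝ, 0 ≤ p → p < p₀ →
      ∃ C' > 0, ∀ β ∈ Set.Ioo (0:ℝ) 1,
        ‖S β (T p u)‖ ≤ C' * β ^ p / Real.log (1 / β) :=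
  low_order_rate_Sbeta_general X T hTadd C ω hC hω hTbound p₀ c hc S hS lam hlam w hint u hu
end

section
/- Suppose λ > ω, w ∈ X, and set u := ∫₀^∞ e^{−λq} T(q) w dq (a convergent Bochner integral). Then there exist β₀ ∈ (0,1) and a finite constant C' > 0 such that ‖R_β u‖ ≤ C' / (β log(1/β)) for all β ∈ (0, β₀]. -/
/-!
Apply `R_β` under the integral and split `∫₀^∞` at `q = 1`. On `(0, 1]` the hypothesis on
`R_β T(q)` bounds the integrand by `c ‖w‖ β^{q-1}`, and `∫₀¹ β^{q-1} dq = (1 - β) / (β log(1/β))`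
produces the rate. On `(1, ∞)` the semigroup law gives `R_β T(q) = (R_β T(1)) T(q - 1)`, so the
integrand is at most `c C ‖w‖ e^{-λq} e^{ω(q-1)}`, whose integral is a constant independent of `β`;
it is absorbed into the rate because `β log(1/β) ≤ 1`.
-/

open Filter Set Topology MeasureTheory Real

theorem integral_rpow_sub_one_zero_one {β : ℝ} (hβ0 : 0 < β) (hβ1 : β ≠ 1) :
    ∫ q in (0:ℝ)..1, β ^ (q - 1) = (1 - β) / (β * log (1 / β)) := by
  have hlog : log β ≠ 0 := log_ne_zero_of_pos_of_ne_one hβ0 hβ1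
  have hderiv : ∀ q ∈ uIcc (0:ℝ) 1,
      HasDerivAt (fun q => β ^ (q - 1) / log β) (β ^ (q - 1)) q := fun q _ => by
    simpa [hlog] using
      (((hasStrictDerivAt_const_rpow hβ0 (q - 1)).hasDerivAt.comp_sub_const q 1).div_const (log β))
  rw [intervalIntegral.integral_eq_sub_of_hasDerivAt hderiv
      ((by fun_prop (disch := exact hβ0.ne') :
        Continuous fun q : ℝ => β ^ (q - 1)).intervalIntegrable _ _),
    sub_self, rpow_zero, zero_sub, rpow_neg_one, one_div β, log_inv]
  field_simp
  ring

theorem mul_log_one_div_mem_Ioc {β : ℝ} (hβ : β ∈ Ioo (0:ℝ) 1) :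
    β * log (1 / β) ∈ Ioc (0:ℝ) 1 := by
  refine ⟨mul_pos hβ.1 (log_pos ((one_lt_div hβ.1).2 hβ.2)), ?_⟩
  have := abs_log_mul_self_lt β hβ.1 hβ.2.le
  rw [one_div, log_inv]
  linarith [neg_abs_le (log β * β)]

section LaplaceTransform

variable {X Y : Type*} [NormedAddCommGroup X] [NormedSpace ℝ X]
  [NormedAddCommGroup Y] [NormedSpace ℝ Y]

theorem norm_laplace_integral_zero_one_le (S : X →L[ℝ] Y) (T : ℝ → X →L[ℝ] X)
    {c β lam : ℝ} (hc : 0 ≤ c) (hβ : β ∈ Ioo (0:ℝ) 1) (hlam : 0 ≤ lam)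
    (hS : ∀ q ∈ Icc (0:ℝ) 1, ‖S.comp (T q)‖ ≤ c * β ^ (q - 1)) (w : X) :
    ‖∫ q in (0:ℝ)..1, exp (-lam * q) • S (T q w)‖ ≤ c * ‖w‖ / (β * log (1 / β)) := by
  have hpoint : ∀ q ∈ Ioc (0:ℝ) 1, ‖exp (-lam * q) • S (T q w)‖ ≤ c * ‖w‖ * β ^ (q - 1) := by
    intro q hq
    have hexp : exp (-lam * q) ≤ 1 := exp_le_one_iff.2 (by nlinarith [hq.1])
    calc ‖exp (-lam * q) • S (T q w)‖ = exp (-lam * q) * ‖S.comp (T q) w‖ := by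
          rw [norm_smul, norm_of_nonneg (exp_pos _).le]; rfl
      _ ≤ 1 * (‖S.comp (T q)‖ * ‖w‖) := by
          gcongr
          exact (S.comp (T q)).le_opNorm w
      _ ≤ c * ‖w‖ * β ^ (q - 1) := by
          rw [one_mul, mul_right_comm]
          gcongr
          exact hS q (Ioc_subset_Icc_self hq)
  have hlog := (mul_log_one_div_mem_Ioc hβ).1
  calc ‖∫ q in (0:ℝ)..1, exp (-lam * q) • S (T q w)‖
      ≤ ∫ q in (0:ℝ)..1, c * ‖w‖ * β ^ (q - 1) :=
        intervalIntegral.norm_integral_le_of_norm_le zero_le_one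
          (Eventually.of_forall hpoint)
          ((by fun_prop (disch := exact hβ.1.ne') :
            Continuous fun q : ℝ => c * ‖w‖ * β ^ (q - 1)).intervalIntegrable _ _)
    _ = c * ‖w‖ * ((1 - β) / (β * log (1 / β))) := by
        rw [intervalIntegral.integral_const_mul, integral_rpow_sub_one_zero_one hβ.1 hβ.2.ne]
    _ ≤ c * ‖w‖ / (β * log (1 / β)) := by
        rw [mul_div_assoc']
        exact div_le_div_of_nonneg_right
          (mul_le_of_le_one_right (by positivity) (by linarith [hβ.1])) hlog.le

theorem norm_comp_apply_le_of_one_le (S : X →L[ℝ] Y) (T : ℝ → X →L[ℝ] X)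
    (hTadd : ∀ q₁ q₂ : ℝ, 0 ≤ q₁ → 0 ≤ q₂ → T (q₁ + q₂) = (T q₁).comp (T q₂))
    {c C ω : ℝ} (hTbound : ∀ q : ℝ, 0 ≤ q → ‖T q‖ ≤ C * exp (ω * q))
    (hc : 0 ≤ c) (hS : ‖S.comp (T 1)‖ ≤ c) {q : ℝ} (hq : 1 ≤ q) (w : X) :
    ‖S (T q w)‖ ≤ c * C * exp (ω * (q - 1)) * ‖w‖ := by
  have hTq : T q = (T 1).comp (T (q - 1)) := by
    simpa using hTadd 1 (q - 1) zero_le_one (by linarith)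
  calc ‖S (T q w)‖ = ‖S.comp (T 1) (T (q - 1) w)‖ := by rw [hTq]; rfl
    _ ≤ ‖S.comp (T 1)‖ * (‖T (q - 1)‖ * ‖w‖) :=
        ((S.comp (T 1)).le_opNorm _).trans (by gcongr; exact (T (q - 1)).le_opNorm w)
    _ ≤ c * (C * exp (ω * (q - 1)) * ‖w‖) := by
        gcongr
        exact hTbound _ (by linarith)
    _ = c * C * exp (ω * (q - 1)) * ‖w‖ := by ring

theorem norm_laplace_integral_Ioi_one_le (S : X →L[ℝ] Y) (T : ℝ → X →L[ℝ] X)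
    (hTadd : ∀ q₁ q₂ : ℝ, 0 ≤ q₁ → 0 ≤ q₂ → T (q₁ + q₂) = (T q₁).comp (T q₂))
    {c C ω lam : ℝ} (hTbound : ∀ q : ℝ, 0 ≤ q → ‖T q‖ ≤ C * exp (ω * q))
    (hc : 0 ≤ c) (hS : ‖S.comp (T 1)‖ ≤ c) (hlam : ω < lam) (w : X) :
    ‖∫ q in Ioi (1:ℝ), exp (-lam * q) • S (T q w)‖ ≤ c * C * ‖w‖ * exp (-lam) / (lam - ω) := by
  set K := c * C * ‖w‖ * exp (-ω)
  have hpoint : ∀ q ∈ Ioi (1:ℝ), ‖exp (-lam * q) • S (T q w)‖ ≤ K * exp ((ω - lam) * q) := by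
    intro q hq
    calc ‖exp (-lam * q) • S (T q w)‖ = exp (-lam * q) * ‖S (T q w)‖ := by
          rw [norm_smul, norm_of_nonneg (exp_pos _).le]
      _ ≤ exp (-lam * q) * (c * C * exp (ω * (q - 1)) * ‖w‖) := by
          gcongr
          exact norm_comp_apply_le_of_one_le S T hTadd hTbound hc hS (le_of_lt hq) w
      _ = K * exp ((ω - lam) * q) := by
          have hexp : exp (-lam * q) * exp (ω * (q - 1)) = exp (-ω) * exp ((ω - lam) * q) := by
            rw [← exp_add, ← exp_add]; ring_nf
          linear_combination (c * C * ‖w‖) * hexp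
  have hint : IntegrableOn (fun q => K * exp ((ω - lam) * q)) (Ioi 1) := by
    have h := (exp_neg_integrableOn_Ioi 1 (sub_pos.2 hlam)).const_mul K
    rwa [neg_sub] at h
  calc ‖∫ q in Ioi (1:ℝ), exp (-lam * q) • S (T q w)‖
      ≤ ∫ q in Ioi (1:ℝ), K * exp ((ω - lam) * q) :=
        norm_integral_le_of_norm_le hint
          ((ae_restrict_iff' measurableSet_Ioi).2 (Eventually.of_forall hpoint))
    _ = c * C * ‖w‖ * exp (-lam) / (lam - ω) := by
        rw [integral_const_mul, integral_exp_mul_Ioi (by linarith)]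
        have hexp : exp (-ω) * exp ((ω - lam) * 1) = exp (-lam) := by
          rw [← exp_add]; ring_nf
        rw [← hexp, neg_div, ← div_neg, neg_sub]
        ring

end LaplaceTransform

theorem low_order_rate_Rbeta_general
    (X : Type*) [NormedAddCommGroup X] [NormedSpace ℝ X] [CompleteSpace X]
    (T : ℝ → (X →L[ℝ] X))
    (hTadd : ∀ q₁ q₂ : ℝ, 0 ≤ q₁ → 0 ≤ q₂ → T (q₁ + q₂) = (T q₁).comp (T q₂))
    (C ω : ℝ) (hC : 0 < C) (hω : 0 < ω)
    (hTbound : ∀ q : ℝ, 0 ≤ q → ‖T q‖ ≤ C * Real.exp (ω * q))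
    (c : ℝ) (hc : 0 < c)
    (R : ℝ → (X →L[ℝ] X))
    (hR : ∀ β ∈ Set.Ioo (0:ℝ) 1, ∀ q ∈ Set.Icc (0:ℝ) 1, ‖(R β).comp (T q)‖ ≤ c * β ^ (q - 1))
    (lam : ℝ) (hlam : ω < lam) (w : X)
    (hint : IntegrableOn (fun q => Real.exp (-lam * q) • T q w) (Set.Ioi (0:ℝ)))
    (u : X) (hu : u = ∫ q in Set.Ioi (0:ℝ), Real.exp (-lam * q) • T q w) :
    ∃ β₀ ∈ Set.Ioo (0:ℝ) 1, ∃ C' > 0, ∀ β ∈ Set.Ioc (0:ℝ) β₀,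
      ‖R β u‖ ≤ C' / (β * Real.log (1 / β)) := by
  set B := c * C * ‖w‖ * exp (-lam) / (lam - ω)
  have hB : 0 ≤ B := div_nonneg (by positivity) (sub_pos.2 hlam).le
  refine ⟨1 / 2, ⟨by norm_num, by norm_num⟩, c * ‖w‖ + B + 1, by positivity, ?_⟩
  rintro β ⟨hβ0, hβ⟩
  have hβ' : β ∈ Ioo (0:ℝ) 1 := ⟨hβ0, by linarith⟩
  set f := fun q => exp (-lam * q) • R β (T q w)
  have hf : IntegrableOn f (Ioi 0) := by
    have h := (R β).integrable_comp hint
    simp only [map_smul] at h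
    exact h
  have hsplit : R β u = (∫ q in (0:ℝ)..1, f q) + ∫ q in Ioi (1:ℝ), f q := by
    rw [intervalIntegral.integral_interval_add_Ioi hf (hf.mono_set (Ioi_subset_Ioi zero_le_one)),
      hu, ← (R β).integral_comp_comm hint]
    simp only [f, map_smul]
  have hnear := norm_laplace_integral_zero_one_le (R β) T (lam := lam) hc.le hβ'
    (by linarith) (hR β hβ') w
  have htail := norm_laplace_integral_Ioi_one_le (R β) T hTadd hTbound hc.le
    (by simpa using hR β hβ' 1 ⟨zero_le_one, le_rfl⟩) hlam w
  obtain ⟨hlog, hlog_le⟩ := mul_log_one_div_mem_Ioc hβ'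
  calc ‖R β u‖ ≤ c * ‖w‖ / (β * log (1 / β)) + B := by
        rw [hsplit]; exact (norm_add_le _ _).trans (add_le_add hnear htail)
    _ ≤ c * ‖w‖ / (β * log (1 / β)) + B / (β * log (1 / β)) + 1 / (β * log (1 / β)) := by
        have := le_div_self hB hlog hlog_le
        have : 0 ≤ 1 / (β * log (1 / β)) := by positivity
        linarith
    _ = (c * ‖w‖ + B + 1) / (β * log (1 / β)) := by ring

/-- Lemma 5.3 (low order rate for `R_β`): for a `C₀`-semigroup `(T(q))_{q≥0}` with
`‖T(q)‖ ≤ C e^{ωq}`, regularizing operators `(R_β)` with `‖R_β T(q)‖ ≤ c β^{q−1}` for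
`q ∈ [0,1]`, and `u = ∫₀^∞ e^{−λq} T(q) w dq` with `λ > ω`, there are `β₀ ∈ (0,1)` and
`C' > 0` with `‖R_β u‖ ≤ C' / (β log(1/β))` for all `β ∈ (0,β₀]`. -/
theorem low_order_rate_Rbeta
    (X : Type*) [NormedAddCommGroup X] [NormedSpace ℝ X] [CompleteSpace X]
    (T : ℝ → (X →L[ℝ] X))
    (hT0 : T 0 = ContinuousLinearMap.id ℝ X)
    (hTadd : ∀ q₁ q₂ : ℝ, 0 ≤ q₁ → 0 ≤ q₂ → T (q₁ + q₂) = (T q₁).comp (T q₂))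
    (hTcont : ∀ w : X, ContinuousOn (fun q => T q w) (Set.Ici (0:ℝ)))
    (C ω : ℝ) (hC : 0 < C) (hω : 0 < ω)
    (hTbound : ∀ q : ℝ, 0 ≤ q → ‖T q‖ ≤ C * Real.exp (ω * q))
    (c : ℝ) (hc : 0 < c)
    (R : ℝ → (X →L[ℝ] X))
    (hR : ∀ β ∈ Set.Ioo (0:ℝ) 1, ∀ q ∈ Set.Icc (0:ℝ) 1, ‖(R β).comp (T q)‖ ≤ c * β ^ (q - 1))
    (lam : ℝ) (hlam : ω < lam) (w : X)
    (hint : IntegrableOn (fun q => Real.exp (-lam * q) • T q w) (Set.Ioi (0:ℝ)))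
    (u : X) (hu : u = ∫ q in Set.Ioi (0:ℝ), Real.exp (-lam * q) • T q w) :
    ∃ β₀ ∈ Set.Ioo (0:ℝ) 1, ∃ C' > 0, ∀ β ∈ Set.Ioc (0:ℝ) β₀,
      ‖R β u‖ ≤ C' / (β * Real.log (1 / β)) :=
  low_order_rate_Rbeta_general X T hTadd C ω hC hω hTbound c hc R hR lam hlam w hint u hu
end

section
/- Assume the Hölder smoothness u† − ū ∈ range(G). Then there exist α₀ > 0 and a finite constant C > 0 such that for every α ∈ (0, α₀], every δ > 0, every data f^δ with ‖f^δ − f†‖ ≤ δ, and every minimizer u_α^δ of T_α^δ over D, one has max{ ‖F(u_α^δ) − f^δ‖ , α^{1/r} ‖G^{-1}(u_α^δ − ū)‖ } ≤ C α^{1/r} + e_r δ, where e_r := 1 if r ≥ 1 and e_r := 2^{−1+1/r} if 0 < r < 1. -/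
/-!
Since `u† − ū = G w` lies in `range G`, the exact solution `u†` is admissible and
`T_α^δ(u†) ≤ δ^r + α‖w‖^r`. With `x` the misfit and `y = α^{1/r}‖G^{-1}(u_α^δ − ū)‖`,
minimality gives `x^r + y^r ≤ δ^r + (α^{1/r}‖w‖)^r`, and comparing the `ℓ^r`- and `ℓ^1`-sums of two numbers
bounds `max x y` by `e_r (δ + α^{1/r}‖w‖)`.
-/

/-- The constant `e_r` with `(a^r + b^r)^{1/r} ≤ e_r (a + b)` for `a, b ≥ 0`. -/
noncomputable def rpowSumConst (r : ℝ) : ℝ :=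
  if 1 ≤ r then 1 else 2 ^ (-1 + 1 / r)

lemma rpowSumConst_pos (r : ℝ) : 0 < rpowSumConst r := by
  unfold rpowSumConst
  split_ifs <;> positivity

lemma rpow_add_rpow_rpow_one_div_le {r a b : ℝ} (hr : 0 < r) (ha : 0 ≤ a) (hb : 0 ≤ b) :
    (a ^ r + b ^ r) ^ (1 / r) ≤ rpowSumConst r * (a + b) := by
  unfold rpowSumConst
  split_ifs with h1
  · rw [one_mul]
    exact Real.rpow_add_rpow_le_add ha hb h1
  · have hp : 1 ≤ 1 / r := by rw [le_div_iff₀ hr]; linarith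
    lift a to NNReal using ha
    lift b to NNReal using hb
    have h := NNReal.rpow_add_le_mul_rpow_add_rpow (a ^ r) (b ^ r) hp
    rw [one_div, NNReal.rpow_rpow_inv hr.ne', NNReal.rpow_rpow_inv hr.ne', ← one_div,
      sub_eq_neg_add] at h
    exact_mod_cast h

lemma le_rpow_add_rpow_rpow_one_div {r x y : ℝ} (hr : 0 < r) (hx : 0 ≤ x) (hy : 0 ≤ y) :
    x ≤ (x ^ r + y ^ r) ^ (1 / r) := by
  rw [one_div, Real.le_rpow_inv_iff_of_pos hx (by positivity) hr]
  exact le_add_of_nonneg_right (by positivity)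

lemma max_le_of_rpow_add_rpow_le {r x y s t : ℝ} (hr : 0 < r) (hx : 0 ≤ x) (hy : 0 ≤ y)
    (hs : 0 ≤ s) (ht : 0 ≤ t) (h : x ^ r + y ^ r ≤ s ^ r + t ^ r) :
    max x y ≤ rpowSumConst r * (s + t) := by
  have hsum : (x ^ r + y ^ r) ^ (1 / r) ≤ rpowSumConst r * (s + t) :=
    (Real.rpow_le_rpow (by positivity) h (by positivity)).trans
      (rpow_add_rpow_rpow_one_div_le hr hs ht)
  refine max_le ((le_rpow_add_rpow_rpow_one_div hr hx hy).trans hsum) ?_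
  rw [add_comm] at hsum
  exact (le_rpow_add_rpow_rpow_one_div hr hy hx).trans hsum

lemma rpow_one_div_mul_rpow {r α t : ℝ} (hr : r ≠ 0) (hα : 0 ≤ α) (ht : 0 ≤ t) :
    (α ^ (1 / r) * t) ^ r = α * t ^ r := by
  rw [Real.mul_rpow (by positivity) ht, ← Real.rpow_mul hα, one_div_mul_cancel hr,
    Real.rpow_one]

theorem misfit_and_penalty_bound_holder_general
    {X Y : Type*} [NormedAddCommGroup X] [NormedSpace ℝ X]
    [NormedAddCommGroup Y]
    (G : X →L[ℝ] X)
    (F : X → Y) (DF : Set X)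
    (D : Set X) (hD : D = DF ∩ Set.range G)
    (udag : X) (hudag : udag ∈ interior DF) (fdag : Y) (hFudag : F udag = fdag)
    (r : ℝ) (hr : 0 < r) (ubar : X) (hubar : ubar ∈ Set.range G)
    (T : ℝ → Y → X → ℝ)
    (hT : ∀ (α : ℝ) (fδ : Y), ∀ u ∈ D, ∀ v : X, G v = u - ubar →
      T α fδ u = ‖F u - fδ‖ ^ r + α * ‖v‖ ^ r)
    (hHolder : udag - ubar ∈ Set.range G) :
    ∃ α₀ > 0, ∃ C > 0, ∀ α ∈ Set.Ioc (0:ℝ) α₀, ∀ δ : ℝ, 0 < δ →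
      ∀ fδ : Y, ‖fδ - fdag‖ ≤ δ →
      ∀ u ∈ D, (∀ u' ∈ D, T α fδ u ≤ T α fδ u') →
      ∀ v : X, G v = u - ubar →
        max ‖F u - fδ‖ (α ^ (1 / r) * ‖v‖) ≤
          C * α ^ (1 / r) + (if 1 ≤ r then (1:ℝ) else (2:ℝ) ^ (-1 + 1 / r)) * δ := by
  obtain ⟨w, hw⟩ := hHolder
  obtain ⟨b, hb⟩ := hubar
  have hudagD : udag ∈ D := hD ▸ ⟨interior_subset hudag, b + w, by rw [map_add, hb, hw]; abel⟩
  have he := rpowSumConst_pos r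
  refine ⟨1, one_pos, rpowSumConst r * (‖w‖ + 1), by positivity, ?_⟩
  rintro α ⟨hα, -⟩ δ hδ fδ hfδ u hu hmin v hv
  have hdata : ‖F udag - fδ‖ ≤ δ := by rwa [hFudag, norm_sub_rev]
  have hcompare : ‖F u - fδ‖ ^ r + (α ^ (1 / r) * ‖v‖) ^ r ≤
      δ ^ r + (α ^ (1 / r) * ‖w‖) ^ r := by
    rw [rpow_one_div_mul_rpow hr.ne' hα.le (norm_nonneg _),
      rpow_one_div_mul_rpow hr.ne' hα.le (norm_nonneg _), ← hT α fδ u hu v hv]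
    calc T α fδ u ≤ T α fδ udag := hmin udag hudagD
      _ = ‖F udag - fδ‖ ^ r + α * ‖w‖ ^ r := hT α fδ udag hudagD w hw
      _ ≤ δ ^ r + α * ‖w‖ ^ r := by gcongr
  have hαr : 0 ≤ α ^ (1 / r) := by positivity
  calc max ‖F u - fδ‖ (α ^ (1 / r) * ‖v‖)
      ≤ rpowSumConst r * (δ + α ^ (1 / r) * ‖w‖) :=
        max_le_of_rpow_add_rpow_le hr (norm_nonneg _) (by positivity) hδ.le (by positivity)
          hcompare
    _ ≤ rpowSumConst r * (‖w‖ + 1) * α ^ (1 / r) + rpowSumConst r * δ := by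
        nlinarith [mul_nonneg he.le hαr]

/-- Lemma 5.4 specialized (Hölder smoothness `p = 1`, degree `a = 1`):
`max{‖F(u_α^δ) − f^δ‖, α^{1/r}‖G^{-1}(u_α^δ − ū)‖} ≤ C α^{1/r} + e_r δ`. -/
theorem misfit_and_penalty_bound_holder
    {X Y : Type*} [NormedAddCommGroup X] [NormedSpace ℝ X] [CompleteSpace X]
    [NormedAddCommGroup Y] [NormedSpace ℝ Y]
    (G : X →L[ℝ] X) (hGinj : Function.Injective G)
    (κs : ℝ) (hκs : 0 < κs)
    (hpos : ∀ β : ℝ, 0 < β →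
      Function.Bijective (G + β • ContinuousLinearMap.id ℝ X) ∧
      ∀ x : X, ‖x‖ ≤ κs / β * ‖(G + β • ContinuousLinearMap.id ℝ X) x‖)
    (F : X → Y) (DF : Set X) (hDFclosed : IsClosed DF) (hFcont : ContinuousOn F DF)
    (D : Set X) (hD : D = DF ∩ Set.range G) (hDne : D.Nonempty)
    (udag : X) (hudag : udag ∈ interior DF) (fdag : Y) (hFudag : F udag = fdag)
    (ca cb c0 c1 : ℝ) (hca : 0 < ca) (hcacb : ca ≤ cb) (hc0 : 0 < c0) (hc1 : 0 < c1)
    (hfwd : ∀ u ∈ D, ‖G (u - udag)‖ ≤ c0 → ‖F u - fdag‖ ≤ cb * ‖G (u - udag)‖)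
    (hinv : ∀ u ∈ D, ‖F u - fdag‖ ≤ c1 → ca * ‖G (u - udag)‖ ≤ ‖F u - fdag‖)
    (r : ℝ) (hr : 0 < r) (ubar : X) (hubar : ubar ∈ Set.range G)
    (T : ℝ → Y → X → ℝ)
    (hT : ∀ (α : ℝ) (fδ : Y), ∀ u ∈ D, ∀ v : X, G v = u - ubar →
      T α fδ u = ‖F u - fδ‖ ^ r + α * ‖v‖ ^ r)
    (hHolder : udag - ubar ∈ Set.range G) :
    ∃ α₀ > 0, ∃ C > 0, ∀ α ∈ Set.Ioc (0:ℝ) α₀, ∀ δ : ℝ, 0 < δ →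
      ∀ fδ : Y, ‖fδ - fdag‖ ≤ δ →
      ∀ u ∈ D, (∀ u' ∈ D, T α fδ u ≤ T α fδ u') →
      ∀ v : X, G v = u - ubar →
        max ‖F u - fδ‖ (α ^ (1 / r) * ‖v‖) ≤
          C * α ^ (1 / r) + (if 1 ≤ r then (1:ℝ) else (2:ℝ) ^ (-1 + 1 / r)) * δ :=
  misfit_and_penalty_bound_holder_general G F DF D hD udag hudag fdag hFudag r hr ubar hubar T hT
    hHolder
end

section
/- Assume the Hölder smoothness u† − ū ∈ range(G). Then there exist α₀ > 0, δ₀ > 0 and finite constants C, K₂ > 0 such that for every α ∈ (0, α₀], every δ ∈ [0, δ₀], every data f^δ with ‖f^δ − f†‖ ≤ δ, and every minimizer u_α^δ of T_α^δ over D, one has ‖G(u_α^δ − u†)‖ ≤ C α^{1/r} + K₂ δ. -/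
open Filter Set Topology

/-!
Comparing the minimizer `u` of the Tikhonov functional with `u†`, which is admissible because
`u† - ū = G w`, gives `‖F u - f^δ‖ʳ ≤ δʳ + α ‖w‖ʳ`, hence `‖F u - f†‖ ≲ α^{1/r} + δ`. For small
`α` and `δ` this residual is below `c₁`, and the inverse nonlinearity condition turns it into the
bound on `‖G (u - u†)‖`.
-/

theorem Real.le_two_rpow_inv_mul_add_of_rpow_le {x a b r : ℝ} (hx : 0 ≤ x) (ha : 0 ≤ a)
    (hb : 0 ≤ b) (hr : 0 < r) (h : x ^ r ≤ a ^ r + b ^ r) : x ≤ 2 ^ (1 / r) * (a + b) := by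
  have hab : 0 ≤ a + b := add_nonneg ha hb
  have hM : (0 : ℝ) ≤ 2 ^ (1 / r) := by positivity
  rw [← Real.rpow_le_rpow_iff hx (mul_nonneg hM hab) hr, Real.mul_rpow hM hab,
    one_div, Real.rpow_inv_rpow (by norm_num) hr.ne']
  calc x ^ r ≤ a ^ r + b ^ r := h
    _ ≤ (a + b) ^ r + (a + b) ^ r := by gcongr <;> linarith
    _ = 2 * (a + b) ^ r := by ring

theorem norm_sub_le_of_rpow_norm_sub_le {Y : Type*} [SeminormedAddCommGroup Y]
    {y f fδ : Y} {r α δ W : ℝ} (hr : 0 < r) (hα : 0 ≤ α) (hW : 0 ≤ W)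
    (hfδ : ‖fδ - f‖ ≤ δ) (h : ‖y - fδ‖ ^ r ≤ ‖f - fδ‖ ^ r + α * W ^ r) :
    ‖y - f‖ ≤ 2 ^ (1 / r) * W * α ^ (1 / r) + (2 ^ (1 / r) + 1) * δ := by
  have hδ : 0 ≤ δ := (norm_nonneg _).trans hfδ
  have hres : ‖y - fδ‖ ≤ 2 ^ (1 / r) * (δ + α ^ (1 / r) * W) := by
    refine Real.le_two_rpow_inv_mul_add_of_rpow_le (norm_nonneg _) hδ (by positivity) hr ?_
    calc ‖y - fδ‖ ^ r ≤ ‖f - fδ‖ ^ r + α * W ^ r := h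
      _ ≤ δ ^ r + (α ^ (1 / r) * W) ^ r := by
        rw [Real.mul_rpow (by positivity) hW, one_div, Real.rpow_inv_rpow hα hr.ne',
          norm_sub_rev]
        gcongr
  calc ‖y - f‖ ≤ ‖y - fδ‖ + ‖fδ - f‖ := norm_sub_le_norm_sub_add_norm_sub _ _ _
    _ ≤ 2 ^ (1 / r) * (δ + α ^ (1 / r) * W) + δ := add_le_add hres hfδ
    _ = _ := by ring

theorem exists_mul_rpow_add_mul_le {r A B c : ℝ} (hr : 0 < r) (hA : 0 ≤ A) (hB : 0 ≤ B)
    (hc : 0 < c) : ∃ α₀ > 0, ∃ δ₀ > 0, ∀ α ∈ Icc 0 α₀, ∀ δ ∈ Icc 0 δ₀,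
      A * α ^ (1 / r) + B * δ ≤ c := by
  refine ⟨(c / (2 * (A + 1))) ^ r, by positivity, c / (2 * (B + 1)), by positivity, ?_⟩
  rintro α ⟨hα, hαα₀⟩ δ ⟨hδ, hδδ₀⟩
  have hαr : α ^ (1 / r) ≤ c / (2 * (A + 1)) := by
    rwa [one_div, Real.rpow_inv_le_iff_of_pos hα (by positivity) hr]
  calc A * α ^ (1 / r) + B * δ ≤ (A + 1) * (c / (2 * (A + 1))) + (B + 1) * (c / (2 * (B + 1))) := by
        gcongr <;> linarith
    _ = c := by field_simp; ring

theorem Ga_error_bound_holder_general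
    {X Y : Type*} [NormedAddCommGroup X] [NormedSpace ℝ X]
    [NormedAddCommGroup Y]
    (G : X →L[ℝ] X)
    (F : X → Y) (DF : Set X)
    (D : Set X) (hD : D = DF ∩ Set.range G)
    (udag : X) (hudag : udag ∈ interior DF) (fdag : Y) (hFudag : F udag = fdag)
    (ca c1 : ℝ) (hca : 0 < ca) (hc1 : 0 < c1)
    (hinv : ∀ u ∈ D, ‖F u - fdag‖ ≤ c1 → ca * ‖G (u - udag)‖ ≤ ‖F u - fdag‖)
    (r : ℝ) (hr : 0 < r) (ubar : X) (hubar : ubar ∈ Set.range G)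
    (T : ℝ → Y → X → ℝ)
    (hT : ∀ (α : ℝ) (fδ : Y), ∀ u ∈ D, ∀ v : X, G v = u - ubar →
      T α fδ u = ‖F u - fδ‖ ^ r + α * ‖v‖ ^ r)
    (hHolder : udag - ubar ∈ Set.range G) :
    ∃ α₀ > 0, ∃ δ₀ > 0, ∃ C > 0, ∃ K₂ > 0,
      ∀ α ∈ Set.Ioc (0:ℝ) α₀, ∀ δ ∈ Set.Icc (0:ℝ) δ₀,
      ∀ fδ : Y, ‖fδ - fdag‖ ≤ δ →
      ∀ u ∈ D, (∀ u' ∈ D, T α fδ u ≤ T α fδ u') →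
        ‖G (u - udag)‖ ≤ C * α ^ (1 / r) + K₂ * δ := by
  obtain ⟨w, hw⟩ := hHolder
  obtain ⟨v, hv⟩ := hubar
  have hudagD : udag ∈ D :=
    hD ▸ ⟨interior_subset hudag, w + v, by rw [map_add, hw, hv, sub_add_cancel]⟩
  set M : ℝ := 2 ^ (1 / r)
  obtain ⟨α₀, hα₀, δ₀, hδ₀, hsmall⟩ :=
    exists_mul_rpow_add_mul_le (A := M * ‖w‖) (B := M + 1) hr (by positivity) (by positivity) hc1
  refine ⟨α₀, hα₀, δ₀, hδ₀, M * (‖w‖ + 1) / ca, by positivity, (M + 1) / ca, by positivity, ?_⟩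
  rintro α ⟨hα, hαα₀⟩ δ hδ fδ hfδ u hu hmin
  obtain ⟨x, rfl⟩ : u ∈ range G := (hD ▸ hu).2
  have hcompare : ‖F (G x) - fδ‖ ^ r ≤ ‖fdag - fδ‖ ^ r + α * ‖w‖ ^ r := by
    have h := hmin udag hudagD
    rw [hT α fδ _ hu (x - v) (by rw [map_sub, hv]), hT α fδ udag hudagD w hw, hFudag] at h
    have : 0 ≤ α * ‖x - v‖ ^ r := by positivity
    linarith
  have herr := norm_sub_le_of_rpow_norm_sub_le hr hα.le (norm_nonneg w) hfδ hcompare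
  have hres := herr.trans (hsmall α ⟨hα.le, hαα₀⟩ δ hδ)
  rw [div_mul_eq_mul_div, div_mul_eq_mul_div, ← add_div, le_div_iff₀' hca]
  calc ca * ‖G (G x - udag)‖ ≤ M * ‖w‖ * α ^ (1 / r) + (M + 1) * δ := (hinv _ hu hres).trans herr
    _ ≤ M * (‖w‖ + 1) * α ^ (1 / r) + (M + 1) * δ := by gcongr; linarith

/-- Corollary 5.5 specialized (Hölder smoothness `p = 1`, degree `a = 1`):
`‖G(u_α^δ − u†)‖ ≤ C α^{1/r} + K₂ δ`. -/
theorem Ga_error_bound_holder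
    {X Y : Type*} [NormedAddCommGroup X] [NormedSpace ℝ X] [CompleteSpace X]
    [NormedAddCommGroup Y] [NormedSpace ℝ Y]
    (G : X →L[ℝ] X) (hGinj : Function.Injective G)
    (κs : ℝ) (hκs : 0 < κs)
    (hpos : ∀ β : ℝ, 0 < β →
      Function.Bijective (G + β • ContinuousLinearMap.id ℝ X) ∧
      ∀ x : X, ‖x‖ ≤ κs / β * ‖(G + β • ContinuousLinearMap.id ℝ X) x‖)
    (F : X → Y) (DF : Set X) (hDFclosed : IsClosed DF) (hFcont : ContinuousOn F DF)
    (D : Set X) (hD : D = DF ∩ Set.range G) (hDne : D.Nonempty)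
    (udag : X) (hudag : udag ∈ interior DF) (fdag : Y) (hFudag : F udag = fdag)
    (ca cb c0 c1 : ℝ) (hca : 0 < ca) (hcacb : ca ≤ cb) (hc0 : 0 < c0) (hc1 : 0 < c1)
    (hfwd : ∀ u ∈ D, ‖G (u - udag)‖ ≤ c0 → ‖F u - fdag‖ ≤ cb * ‖G (u - udag)‖)
    (hinv : ∀ u ∈ D, ‖F u - fdag‖ ≤ c1 → ca * ‖G (u - udag)‖ ≤ ‖F u - fdag‖)
    (r : ℝ) (hr : 0 < r) (ubar : X) (hubar : ubar ∈ Set.range G)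
    (T : ℝ → Y → X → ℝ)
    (hT : ∀ (α : ℝ) (fδ : Y), ∀ u ∈ D, ∀ v : X, G v = u - ubar →
      T α fδ u = ‖F u - fδ‖ ^ r + α * ‖v‖ ^ r)
    (hHolder : udag - ubar ∈ Set.range G) :
    ∃ α₀ > 0, ∃ δ₀ > 0, ∃ C > 0, ∃ K₂ > 0,
      ∀ α ∈ Set.Ioc (0:ℝ) α₀, ∀ δ ∈ Set.Icc (0:ℝ) δ₀,
      ∀ fδ : Y, ‖fδ - fdag‖ ≤ δ →
      ∀ u ∈ D, (∀ u' ∈ D, T α fδ u ≤ T α fδ u') →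
        ‖G (u - udag)‖ ≤ C * α ^ (1 / r) + K₂ * δ :=
  Ga_error_bound_holder_general G F DF D hD udag hudag fdag hFudag ca c1 hca hc1 hinv r hr ubar
    hubar T hT hHolder
end

section
/- Error estimate for regularized solutions under Hölder smoothness: assume u† − ū ∈ range(G). Then there exist α₀ > 0, δ₀ > 0 and finite constants C, K₁ > 0 such that for every α ∈ (0, α₀], every δ ∈ (0, δ₀], every data f^δ with ‖f^δ − f†‖ ≤ δ, and every minimizer u_α^δ of T_α^δ over D, one has ‖u_α^δ − u†‖ ≤ C α^{1/(2r)} + K₁ δ / α^{1/(2r)}. -/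
/-!
Comparing the minimizer `u` with `u†` in the Tikhonov functional bounds both the residual
`‖F u - f^δ‖` by `2^{1/r} (δ + α^{1/r} ‖w‖)` and the penalty `‖G⁻¹(u - ū)‖` by
`2^{1/r} (δ / α^{1/r} + ‖w‖)`, where `G w = u† - ū`. For small `α` and `δ` the residual is small, so
the inverse nonlinearity condition bounds `‖G (u - u†)‖ ≲ δ + α^{1/r}`. Writing `u - u† = G x` with
`x = G⁻¹(u - ū) - w`, the interpolation inequality `‖G x‖ ≤ κ/β ‖G² x‖ + β (1 + κ) ‖x‖` of an
operator of positive type, taken at `β = α^{1/(2r)}`, balances the two bounds.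
-/

open Set

section PositiveType

variable {X : Type*} [NormedAddCommGroup X] [NormedSpace ℝ X]

/-- `G` is of positive type with constant `κ`: `‖(G + β)⁻¹‖ ≤ κ / β` for every `β > 0`. -/
def IsPositiveType (G : X →L[ℝ] X) (κ : ℝ) : Prop :=
  ∀ β : ℝ, 0 < β →
    Function.Bijective (G + β • ContinuousLinearMap.id ℝ X) ∧
    ∀ x : X, ‖x‖ ≤ κ / β * ‖(G + β • ContinuousLinearMap.id ℝ X) x‖

variable {G : X →L[ℝ] X} {κ : ℝ}

theorem IsPositiveType.norm_apply_le (hG : IsPositiveType G κ) {β : ℝ} (hβ : 0 < β) (x : X) :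
    ‖G x‖ ≤ κ / β * ‖G (G x)‖ + β * (1 + κ) * ‖x‖ := by
  obtain ⟨⟨hinj, hsurj⟩, hbound⟩ := hG β hβ
  set A := G + β • ContinuousLinearMap.id ℝ X
  have hA : ∀ y, A y = G y + β • y := fun y ↦ rfl
  obtain ⟨z, hz⟩ := hsurj x
  obtain ⟨z₂, hz₂⟩ := hsurj (G (G x))
  have hGz : G z = x - β • z := by rw [← hz, hA]; abel
  have hAGz : A (G z) = G x := by rw [hA, ← hz, hA, map_add, map_smul]
  have hGx : G x = z₂ + β • G z := hinj <| by rw [map_add, map_smul, hz₂, hAGz, hA]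
  have hz₂_le : ‖z₂‖ ≤ κ / β * ‖G (G x)‖ := by simpa only [hz₂] using hbound z₂
  have hGz_le : ‖G z‖ ≤ (1 + κ) * ‖x‖ := by
    have hz_le : β * ‖z‖ ≤ κ * ‖x‖ := by
      have := hbound z
      rwa [hz, div_mul_eq_mul_div, le_div_iff₀ hβ, mul_comm] at this
    calc ‖G z‖ ≤ ‖x‖ + β * ‖z‖ := by
          rw [hGz, ← norm_smul_of_nonneg hβ.le]; exact norm_sub_le _ _
      _ ≤ (1 + κ) * ‖x‖ := by linarith
  calc ‖G x‖ ≤ ‖z₂‖ + β * ‖G z‖ := by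
        rw [hGx, ← norm_smul_of_nonneg hβ.le]; exact norm_add_le _ _
    _ ≤ κ / β * ‖G (G x)‖ + β * ((1 + κ) * ‖x‖) := by gcongr
    _ = κ / β * ‖G (G x)‖ + β * (1 + κ) * ‖x‖ := by ring

theorem IsPositiveType.norm_apply_sub_le_of_bounds (hG : IsPositiveType G κ) (hκ : 0 ≤ κ)
    {s ca M δ : ℝ} (hs : 0 < s) (hca : 0 < ca) (v w : X)
    (hGG : ca * ‖G (G (v - w))‖ ≤ M * (δ + s * s * ‖w‖) + δ)
    (hv : s * s * ‖v‖ ≤ M * (δ + s * s * ‖w‖)) :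
    ‖G (v - w)‖ ≤ (κ * M * ‖w‖ / ca + (1 + κ) * (M + 1) * ‖w‖) * s
      + (κ * (M + 1) / ca + (1 + κ) * M) * δ / s := by
  have hGG' : ‖G (G (v - w))‖ ≤ (M * (δ + s * s * ‖w‖) + δ) / ca := by
    rwa [le_div_iff₀ hca, mul_comm]
  have hvw : ‖v - w‖ ≤ (M * (δ + s * s * ‖w‖) + s * s * ‖w‖) / (s * s) := by
    rw [le_div_iff₀ (by positivity)]
    have := mul_le_mul_of_nonneg_left (norm_sub_le v w) (mul_self_nonneg s)
    linarith
  calc ‖G (v - w)‖ ≤ κ / s * ‖G (G (v - w))‖ + s * (1 + κ) * ‖v - w‖ := hG.norm_apply_le hs _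
    _ ≤ κ / s * ((M * (δ + s * s * ‖w‖) + δ) / ca)
        + s * (1 + κ) * ((M * (δ + s * s * ‖w‖) + s * s * ‖w‖) / (s * s)) := by gcongr
    _ = _ := by field_simp; ring

end PositiveType

section TikhonovBounds

theorem le_two_rpow_one_div_mul_add {r a b c : ℝ} (hr : 0 < r) (ha : 0 ≤ a) (hb : 0 ≤ b)
    (h : c ^ r ≤ a ^ r + b ^ r) : c ≤ 2 ^ (1 / r) * (a + b) := by
  by_contra! hlt
  have h2 : ((2 : ℝ) ^ (1 / r) * (a + b)) ^ r = 2 * (a + b) ^ r := by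
    rw [Real.mul_rpow (by positivity) (by positivity), ← Real.rpow_mul zero_le_two,
      one_div_mul_cancel hr.ne', Real.rpow_one]
  have hlt' := Real.rpow_lt_rpow (by positivity) hlt hr
  have ha' : a ^ r ≤ (a + b) ^ r := Real.rpow_le_rpow ha (by linarith) hr.le
  have hb' : b ^ r ≤ (a + b) ^ r := Real.rpow_le_rpow hb (by linarith) hr.le
  linarith

variable {r t E V δ W : ℝ}

theorem residual_le_of_rpow_add_le (hr : 0 < r) (ht : 0 ≤ t) (hV : 0 ≤ V) (hδ : 0 ≤ δ)
    (hW : 0 ≤ W) (h : E ^ r + t ^ r * V ^ r ≤ δ ^ r + t ^ r * W ^ r) :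
    E ≤ 2 ^ (1 / r) * (δ + t * W) := by
  refine le_two_rpow_one_div_mul_add hr hδ (by positivity) ?_
  rw [Real.mul_rpow ht hW]
  have : 0 ≤ t ^ r * V ^ r := by positivity
  linarith

theorem penalty_le_of_rpow_add_le (hr : 0 < r) (ht : 0 ≤ t) (hE : 0 ≤ E) (hV : 0 ≤ V)
    (hδ : 0 ≤ δ) (hW : 0 ≤ W) (h : E ^ r + t ^ r * V ^ r ≤ δ ^ r + t ^ r * W ^ r) :
    t * V ≤ 2 ^ (1 / r) * (δ + t * W) := by
  refine le_two_rpow_one_div_mul_add hr hδ (by positivity) ?_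
  rw [Real.mul_rpow ht hV, Real.mul_rpow ht hW]
  have : 0 ≤ E ^ r := by positivity
  linarith

theorem mul_add_add_le_of_le_div {M c W t δ : ℝ} (hM : 0 < M) (hW : 0 ≤ W) (ht₀ : 0 ≤ t)
    (ht : t ≤ c / (2 * M * (W + 1))) (hδ : δ ≤ c / (2 * (M + 1))) :
    M * (δ + t * W) + δ ≤ c := by
  rw [le_div_iff₀ (by positivity)] at ht hδ
  have : 0 ≤ M * t := by positivity
  nlinarith

theorem rpow_one_div_two_mul_mul_self_rpow {α r : ℝ} (hα : 0 < α) (hr : r ≠ 0) :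
    (α ^ (1 / (2 * r)) * α ^ (1 / (2 * r))) ^ r = α := by
  rw [← Real.rpow_add hα, ← mul_two, ← Real.rpow_mul hα.le]
  field_simp
  exact Real.rpow_one α

end TikhonovBounds

theorem error_estimate_holder_general
    {X Y : Type*} [NormedAddCommGroup X] [NormedSpace ℝ X]
    [NormedAddCommGroup Y]
    (G : X →L[ℝ] X)
    (κs : ℝ) (hκs : 0 < κs)
    (hpos : ∀ β : ℝ, 0 < β →
      Function.Bijective (G + β • ContinuousLinearMap.id ℝ X) ∧
      ∀ x : X, ‖x‖ ≤ κs / β * ‖(G + β • ContinuousLinearMap.id ℝ X) x‖)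
    (F : X → Y) (DF : Set X)
    (D : Set X) (hD : D = DF ∩ Set.range G)
    (udag : X) (hudag : udag ∈ interior DF) (fdag : Y) (hFudag : F udag = fdag)
    (ca c1 : ℝ) (hca : 0 < ca) (hc1 : 0 < c1)
    (hinv : ∀ u ∈ D, ‖F u - fdag‖ ≤ c1 → ca * ‖G (u - udag)‖ ≤ ‖F u - fdag‖)
    (r : ℝ) (hr : 0 < r) (ubar : X) (hubar : ubar ∈ Set.range G)
    (T : ℝ → Y → X → ℝ)
    (hT : ∀ (α : ℝ) (fδ : Y), ∀ u ∈ D, ∀ v : X, G v = u - ubar →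
      T α fδ u = ‖F u - fδ‖ ^ r + α * ‖v‖ ^ r)
    (hHolder : udag - ubar ∈ Set.range G) :
    ∃ α₀ > 0, ∃ δ₀ > 0, ∃ C > 0, ∃ K₁ > 0,
      ∀ α ∈ Set.Ioc (0:ℝ) α₀, ∀ δ ∈ Set.Ioc (0:ℝ) δ₀,
      ∀ fδ : Y, ‖fδ - fdag‖ ≤ δ →
      ∀ u ∈ D, (∀ u' ∈ D, T α fδ u ≤ T α fδ u') →
        ‖u - udag‖ ≤ C * α ^ (1 / (2 * r)) + K₁ * δ / α ^ (1 / (2 * r)) := by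
  obtain ⟨w, hw⟩ := hHolder
  obtain ⟨b, rfl⟩ := hubar
  subst hD
  set M : ℝ := 2 ^ (1 / r)
  have hM : 0 < M := by positivity
  -- `α₀` and `δ₀` keep the residual below `c1`, where the inverse nonlinearity condition holds.
  refine ⟨(c1 / (2 * M * (‖w‖ + 1))) ^ r, by positivity, c1 / (2 * (M + 1)), by positivity,
    κs * M * ‖w‖ / ca + (1 + κs) * (M + 1) * ‖w‖ + 1, by positivity,
    κs * (M + 1) / ca + (1 + κs) * M, by positivity, ?_⟩
  rintro α ⟨hα, hαα₀⟩ δ ⟨hδ, hδδ₀⟩ fδ hfδ _ hu hmin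
  obtain ⟨a, rfl⟩ := hu.2
  have hudagD : udag ∈ DF ∩ range G := ⟨interior_subset hudag, w + b, by rw [map_add, hw]; abel⟩
  set s := α ^ (1 / (2 * r))
  have hs : 0 < s := by positivity
  have hss : (s * s) ^ r = α := rpow_one_div_two_mul_mul_self_rpow hα hr.ne'
  have hcompare : ‖F (G a) - fδ‖ ^ r + (s * s) ^ r * ‖a - b‖ ^ r
      ≤ δ ^ r + (s * s) ^ r * ‖w‖ ^ r := by
    have hdata : ‖fdag - fδ‖ ^ r ≤ δ ^ r := by gcongr; rwa [norm_sub_rev]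
    have := hmin udag hudagD
    rw [hT α fδ _ hu (a - b) (map_sub G a b), hT α fδ _ hudagD w hw, hFudag, ← hss] at this
    linarith
  have hres := residual_le_of_rpow_add_le hr (by positivity) (norm_nonneg _) hδ.le
    (norm_nonneg w) hcompare
  have hsmall := mul_add_add_le_of_le_div hM (norm_nonneg w) (mul_self_nonneg s)
    ((Real.rpow_le_rpow_iff (by positivity) (by positivity) hr).mp (hss ▸ hαα₀)) hδδ₀
  have hdata : ‖F (G a) - fdag‖ ≤ ‖F (G a) - fδ‖ + δ :=
    (norm_sub_le_norm_sub_add_norm_sub _ fδ _).trans (by gcongr)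
  have hsrc : G (a - b - w) = G a - udag := by rw [map_sub, map_sub, hw]; abel
  have herr := IsPositiveType.norm_apply_sub_le_of_bounds hpos hκs.le hs hca (a - b) w
    (hsrc ▸ (hinv _ hu (by linarith)).trans (by linarith))
    (penalty_le_of_rpow_add_le hr (by positivity) (norm_nonneg _) (norm_nonneg _) hδ.le
      (norm_nonneg w) hcompare)
  rw [hsrc] at herr
  exact herr.trans (by gcongr ?_ * s + _; exact le_add_of_nonneg_right zero_le_one)

/-- Theorem 3.1 specialized (Hölder smoothness `p = 1`, degree `a = 1`, `κ = 1/(2r)`):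
error estimate `‖u_α^δ − u†‖ ≤ C α^{1/(2r)} + K₁ δ/α^{1/(2r)}`. -/
theorem error_estimate_holder
    {X Y : Type*} [NormedAddCommGroup X] [NormedSpace ℝ X] [CompleteSpace X]
    [NormedAddCommGroup Y] [NormedSpace ℝ Y]
    (G : X →L[ℝ] X) (hGinj : Function.Injective G)
    (κs : ℝ) (hκs : 0 < κs)
    (hpos : ∀ β : ℝ, 0 < β →
      Function.Bijective (G + β • ContinuousLinearMap.id ℝ X) ∧
      ∀ x : X, ‖x‖ ≤ κs / β * ‖(G + β • ContinuousLinearMap.id ℝ X) x‖)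
    (F : X → Y) (DF : Set X) (hDFclosed : IsClosed DF) (hFcont : ContinuousOn F DF)
    (D : Set X) (hD : D = DF ∩ Set.range G) (hDne : D.Nonempty)
    (udag : X) (hudag : udag ∈ interior DF) (fdag : Y) (hFudag : F udag = fdag)
    (ca cb c0 c1 : ℝ) (hca : 0 < ca) (hcacb : ca ≤ cb) (hc0 : 0 < c0) (hc1 : 0 < c1)
    (hfwd : ∀ u ∈ D, ‖G (u - udag)‖ ≤ c0 → ‖F u - fdag‖ ≤ cb * ‖G (u - udag)‖)
    (hinv : ∀ u ∈ D, ‖F u - fdag‖ ≤ c1 → ca * ‖G (u - udag)‖ ≤ ‖F u - fdag‖)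
    (r : ℝ) (hr : 0 < r) (ubar : X) (hubar : ubar ∈ Set.range G)
    (T : ℝ → Y → X → ℝ)
    (hT : ∀ (α : ℝ) (fδ : Y), ∀ u ∈ D, ∀ v : X, G v = u - ubar →
      T α fδ u = ‖F u - fδ‖ ^ r + α * ‖v‖ ^ r)
    (hHolder : udag - ubar ∈ Set.range G) :
    ∃ α₀ > 0, ∃ δ₀ > 0, ∃ C > 0, ∃ K₁ > 0,
      ∀ α ∈ Set.Ioc (0:ℝ) α₀, ∀ δ ∈ Set.Ioc (0:ℝ) δ₀,
      ∀ fδ : Y, ‖fδ - fdag‖ ≤ δ →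
      ∀ u ∈ D, (∀ u' ∈ D, T α fδ u ≤ T α fδ u') →
        ‖u - udag‖ ≤ C * α ^ (1 / (2 * r)) + K₁ * δ / α ^ (1 / (2 * r)) :=
  error_estimate_holder_general G κs hκs hpos F DF D hD udag hudag fdag hFudag ca c1 hca hc1 hinv r
    hr ubar hubar T hT hHolder
end

section
/- Convergence without explicit smoothness: assume u† ∈ closure(range(G)) and let α : (0, δ̄] → (0,∞) be an a priori parameter choice satisfying α(δ) → 0 and δ/α(δ)^{1/(2r)} → 0 as δ → 0. Then for every ε > 0 there exists δ₀ > 0 such that for all δ ∈ (0, δ₀], all data f^δ with ‖f^δ − f†‖ ≤ δ, and every minimizer u of T_{α(δ)}^δ over D, it holds that ‖u − u†‖ ≤ ε; i.e., the regularized solutions converge in the norm of X to u† as δ → 0. -/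
/-!
Put `b = α^{1/(2r)}`, so that the penalty is `α ‖v‖^r = (b² ‖v‖)^r`, and let
`ρ(β) = ‖β (G + β)⁻¹ (u† - ū)‖`. Because the maps `β (G + β)⁻¹` are uniformly `κ`-bounded and tend
to `0` pointwise on `range G`, `ρ(β) → 0` as `β → 0` for every `u† - ū` in the closure of the range;
this replaces a source condition.

Compare a minimizer `u` with the competitor `w = ū + G (G + θb)⁻¹ (u† - ū)`, for which
`w - u† = -θb (G + θb)⁻¹ (u† - ū)` and `‖G (w - u†)‖ ≤ (1 + κ) ‖u† - ū‖ θb`. Minimality bounds both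
the residual of `u` and `b² ‖G⁻¹(u - ū)‖` by `2^{1/r} b W` with `W = O(θ) + δ/b + ρ(θb)/θ`. The
inverse estimate turns the residual bound into `‖G (u - u†)‖ = O(b (W + δ/b))`, and the
interpolation inequality `‖y‖ ≤ κ/b ‖G y‖ + (1 + κ) b ‖G⁻¹(u - ū)‖ + ρ(b)` for `y = u - u†` gives
`‖u - u†‖ = O(W + δ/b) + ρ(b)`. Choosing `θ` small first and then `δ` small makes this `≤ ε`.
-/

open Filter Set Topology

theorem max_le_rpow_inv_mul_max {r a c A C : ℝ} (hr : 0 < r) (ha : 0 ≤ a) (hc : 0 ≤ c)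
    (hA : 0 ≤ A) (hC : 0 ≤ C) (h : a ^ r + c ^ r ≤ A ^ r + C ^ r) :
    max a c ≤ 2 ^ r⁻¹ * max A C := by
  set M := max A C
  have hM : 0 ≤ M := hA.trans (le_max_left A C)
  have hsum : a ^ r + c ^ r ≤ (2 ^ r⁻¹ * M) ^ r := by
    rw [Real.mul_rpow (by positivity) hM, Real.rpow_inv_rpow zero_le_two hr.ne']
    linarith [Real.rpow_le_rpow hA (le_max_left A C) hr.le,
      Real.rpow_le_rpow hC (le_max_right A C) hr.le]
  have key : ∀ y, 0 ≤ y → y ^ r ≤ (2 ^ r⁻¹ * M) ^ r → y ≤ 2 ^ r⁻¹ * M := fun y hy hyr =>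
    (Real.rpow_le_rpow_iff hy (by positivity) hr).1 hyr
  exact max_le (key a ha (by linarith [Real.rpow_nonneg hc r]))
    (key c hc (by linarith [Real.rpow_nonneg ha r]))

theorem max_le_of_le_competitor {E Y : Type*} [NormedAddCommGroup E] [NormedAddCommGroup Y]
    {G : E → E} {F : E → Y} {D : Set E} {J : E → ℝ} {ubar : E} {fδ : Y} {r α b : ℝ}
    (hr : 0 < r) (hb : 0 ≤ b) (hα : α = (b * b) ^ r)
    (hJ : ∀ u ∈ D, ∀ v, G v = u - ubar → J u = ‖F u - fδ‖ ^ r + α * ‖v‖ ^ r)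
    {u v w p : E} (hu : u ∈ D) (hv : G v = u - ubar) (hw : w ∈ D) (hp : G p = w - ubar)
    (hmin : J u ≤ J w) :
    max ‖F u - fδ‖ (b * b * ‖v‖) ≤ 2 ^ r⁻¹ * max ‖F w - fδ‖ (b * b * ‖p‖) := by
  have hpen : ∀ y : E, α * ‖y‖ ^ r = (b * b * ‖y‖) ^ r := fun y => by
    rw [hα, Real.mul_rpow (by positivity) (norm_nonneg _)]
  refine max_le_rpow_inv_mul_max hr (norm_nonneg _) (by positivity) (norm_nonneg _)
    (by positivity) ?_
  rw [← hpen, ← hpen, ← hJ u hu v hv, ← hJ w hw p hp]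
  exact hmin

theorem exists_forall_Ioc_of_eventually_nhdsGT {α : Type*} [TopologicalSpace α] [LinearOrder α]
    [OrderTopology α] [NoMaxOrder α] [DenselyOrdered α] {p : α → Prop} {a b : α}
    (h : ∀ᶠ x in 𝓝[>] a, p x) (hab : a < b) : ∃ c, a < c ∧ c ≤ b ∧ ∀ x ∈ Ioc a c, p x := by
  obtain ⟨c, hac, hsub⟩ := mem_nhdsGT_iff_exists_Ioc_subset.1 h
  exact ⟨min c b, lt_min hac hab, min_le_right c b,
    fun x hx => hsub ⟨hx.1, hx.2.trans (min_le_left c b)⟩⟩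

theorem tendsto_rpow_nhdsGT_zero {e : ℝ} (he : 0 < e) :
    Tendsto (fun a : ℝ => a ^ e) (𝓝[>] 0) (𝓝[>] 0) := by
  refine tendsto_nhdsWithin_iff.2 ⟨?_, eventually_mem_nhdsWithin.mono fun a ha =>
    Real.rpow_pos_of_pos ha e⟩
  simpa [Real.zero_rpow he.ne'] using
    (Real.continuousAt_rpow_const 0 e (Or.inr he.le)).tendsto.mono_left nhdsWithin_le_nhds

theorem ContinuousLinearMap.sub_mem_closure_range {E : Type*} [NormedAddCommGroup E]
    [NormedSpace ℝ E] (G : E →L[ℝ] E) {x y : E} (hx : x ∈ closure (range G))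
    (hy : y ∈ range G) : x - y ∈ closure (range G) := by
  have h : ((LinearMap.range (G : E →ₗ[ℝ] E)).topologicalClosure : Set E) = closure (range G) := by
    rw [Submodule.topologicalClosure_coe, LinearMap.coe_range]; rfl
  rw [← h] at hx ⊢
  exact sub_mem hx (Submodule.le_topologicalClosure _ (by simpa using hy))

section PositiveType

variable {X : Type*} [NormedAddCommGroup X] [NormedSpace ℝ X]

def IsOfPositiveType (G : X →L[ℝ] X) (κ : ℝ) : Prop :=
  ∀ β : ℝ, 0 < β →
    Function.Bijective (G + β • ContinuousLinearMap.id ℝ X) ∧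
    ∀ x : X, ‖x‖ ≤ κ / β * ‖(G + β • ContinuousLinearMap.id ℝ X) x‖

/-- `(G + β I)⁻¹`, through `Function.invFun`: junk unless `G + β I` is surjective. -/
noncomputable def shiftedInv (G : X →L[ℝ] X) (β : ℝ) : X → X :=
  Function.invFun (G + β • ContinuousLinearMap.id ℝ X)

namespace IsOfPositiveType

variable {G : X →L[ℝ] X} {κ β : ℝ}

theorem apply_shiftedInv (hG : IsOfPositiveType G κ) (hβ : 0 < β) (y : X) :
    G (shiftedInv G β y) + β • shiftedInv G β y = y := by
  simpa [shiftedInv] using Function.invFun_eq ((hG β hβ).1.2 y)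

theorem mul_norm_le (hG : IsOfPositiveType G κ) (hβ : 0 < β) (a : X) :
    β * ‖a‖ ≤ κ * ‖G a + β • a‖ := by
  have h := (hG β hβ).2 a
  simp only [add_apply, smul_apply, ContinuousLinearMap.id_apply] at h
  rwa [div_mul_eq_mul_div, le_div_iff₀' hβ] at h

theorem mul_norm_sub_le_of_apply (hG : IsOfPositiveType G κ) (hβ : 0 < β) {a a' y y' : X}
    (ha : G a + β • a = y) (ha' : G a' + β • a' = y') :
    β * ‖a - a'‖ ≤ κ * ‖y - y'‖ := by
  have h := hG.mul_norm_le hβ (a - a')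
  rwa [map_sub, smul_sub, sub_add_sub_comm, ha, ha'] at h

theorem mul_norm_shiftedInv_le (hG : IsOfPositiveType G κ) (hβ : 0 < β) (y : X) :
    β * ‖shiftedInv G β y‖ ≤ κ * ‖y‖ := by
  simpa only [hG.apply_shiftedInv hβ] using hG.mul_norm_le hβ (shiftedInv G β y)

theorem shiftedInv_eq (hG : IsOfPositiveType G κ) (hβ : 0 < β) {a y : X}
    (h : G a + β • a = y) : shiftedInv G β y = a := by
  have h₀ := hG.mul_norm_sub_le_of_apply hβ (hG.apply_shiftedInv hβ y) h
  rw [sub_self, norm_zero, mul_zero] at h₀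
  exact sub_eq_zero.1 (norm_le_zero_iff.1 (nonpos_of_mul_nonpos_right h₀ hβ))

theorem add_apply_shiftedInv_sub (hG : IsOfPositiveType G κ) (hβ : 0 < β) (x y : X) :
    y + G (shiftedInv G β (x - y)) - x = -(β • shiftedInv G β (x - y)) := by
  rw [eq_sub_of_add_eq (hG.apply_shiftedInv hβ (x - y))]; abel

theorem add_apply_shiftedInv_sub_mem (hG : IsOfPositiveType G κ) (hβ : 0 < β) {DF D : Set X}
    {udag ubar : X} {ρ : ℝ} (hD : D = DF ∩ range G) (hubar : ubar ∈ range G)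
    (hball : Metric.ball udag ρ ⊆ DF) (hρ : ‖β • shiftedInv G β (udag - ubar)‖ < ρ) :
    ubar + G (shiftedInv G β (udag - ubar)) ∈ D := by
  obtain ⟨z, rfl⟩ := hubar
  rw [hD]
  refine ⟨hball ?_, z + shiftedInv G β (udag - G z), by rw [map_add]⟩
  rwa [Metric.mem_ball, dist_eq_norm, hG.add_apply_shiftedInv_sub hβ, norm_neg]

theorem norm_apply_shiftedInv_le (hG : IsOfPositiveType G κ) (hβ : 0 < β) (y : X) :
    ‖G (shiftedInv G β y)‖ ≤ (1 + κ) * ‖y‖ := by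
  have h := hG.mul_norm_shiftedInv_le hβ y
  rw [eq_sub_of_add_eq (hG.apply_shiftedInv hβ y)]
  calc ‖y - β • shiftedInv G β y‖ ≤ ‖y‖ + β * ‖shiftedInv G β y‖ := by
        simpa [norm_smul, abs_of_pos hβ] using norm_sub_le y (β • shiftedInv G β y)
    _ ≤ (1 + κ) * ‖y‖ := by linarith

theorem tendsto_smul_shiftedInv_apply (hG : IsOfPositiveType G κ) (z : X) :
    Tendsto (fun β => β • shiftedInv G β (G z)) (𝓝[>] 0) (𝓝 0) := by
  have hcomm : ∀ β > 0, shiftedInv G β (G z) = G (shiftedInv G β z) := fun β hβ =>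
    hG.shiftedInv_eq hβ (by rw [← map_smul, ← map_add, hG.apply_shiftedInv hβ])
  have hbound : Tendsto (fun β : ℝ => β * ((1 + κ) * ‖z‖)) (𝓝[>] 0) (𝓝 0) :=
    tendsto_nhdsWithin_of_tendsto_nhds ((continuous_mul_const _).tendsto' 0 0 (zero_mul _))
  refine squeeze_zero_norm' ?_ hbound
  filter_upwards [self_mem_nhdsWithin] with β (hβ : 0 < β)
  rw [hcomm β hβ, norm_smul, Real.norm_of_nonneg hβ.le]
  exact mul_le_mul_of_nonneg_left (hG.norm_apply_shiftedInv_le hβ z) hβ.le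

/-- The maps `y ↦ β (G + β I)⁻¹ y` are `κ`-Lipschitz, so the set where they tend to `0` is
closed. -/
theorem tendsto_smul_shiftedInv (hG : IsOfPositiveType G κ) (hκ : 0 ≤ κ) {x : X}
    (hx : x ∈ closure (range G)) :
    Tendsto (fun β => β • shiftedInv G β x) (𝓝[>] 0) (𝓝 0) := by
  let Φ : Ioi (0 : ℝ) → X → X := fun β y => (β : ℝ) • shiftedInv G β y
  have hΦ : Equicontinuous Φ := by
    refine (LipschitzWith.uniformEquicontinuous Φ ⟨κ, hκ⟩ fun β => ?_).equicontinuous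
    refine LipschitzWith.of_dist_le_mul fun y y' => ?_
    have hβ : (0 : ℝ) < β := β.2
    show dist _ _ ≤ κ * dist y y'
    simpa [Φ, dist_eq_norm, ← smul_sub, norm_smul, abs_of_pos hβ] using
      hG.mul_norm_sub_le_of_apply hβ (hG.apply_shiftedInv hβ y) (hG.apply_shiftedInv hβ y')
  have hIoi : range (Subtype.val : Ioi (0 : ℝ) → ℝ) ∈ 𝓝[>] 0 := by
    rw [Subtype.range_coe]; exact self_mem_nhdsWithin
  have hrange : range G ⊆ {y | Tendsto (Φ · y) (comap Subtype.val (𝓝[>] 0)) (𝓝 0)} := by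
    rintro _ ⟨z, rfl⟩
    exact (tendsto_comap'_iff hIoi).2 (hG.tendsto_smul_shiftedInv_apply z)
  exact (tendsto_comap'_iff hIoi).1
    ((hΦ.isClosed_setOfPred_tendsto continuous_const).closure_subset_iff.2 hrange hx)

theorem norm_sub_le (hG : IsOfPositiveType G κ) (hβ : 0 < β) (v x : X) :
    ‖G v - x‖ ≤ κ / β * ‖G (G v - x)‖ + (1 + κ) * (β * ‖v‖) + ‖β • shiftedInv G β x‖ := by
  -- `A = (G + β)⁻¹ G (G v - x)`, identified through `(G + β) A = G (G v - x)` because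
  -- `shiftedInv` is not known to be linear.
  set A := G v - x - β • G (shiftedInv G β v) + β • shiftedInv G β x
  have hA : G A + β • A = G (G v - x) := by
    have hv := hG.apply_shiftedInv hβ v
    have hx := hG.apply_shiftedInv hβ x
    have hv' : G (G (shiftedInv G β v)) + β • G (shiftedInv G β v) = G v := by
      rw [← map_smul, ← map_add, hv]
    simp only [A, map_add, map_sub, map_smul]
    linear_combination (norm := module) (-β) • hv' + β • hx
  have h₁ : β * ‖A‖ ≤ κ * ‖G (G v - x)‖ := hA ▸ hG.mul_norm_le hβ A
  have h₂ : ‖β • G (shiftedInv G β v)‖ ≤ (1 + κ) * (β * ‖v‖) := by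
    rw [norm_smul, Real.norm_of_nonneg hβ.le, mul_left_comm]
    exact mul_le_mul_of_nonneg_left (hG.norm_apply_shiftedInv_le hβ v) hβ.le
  calc ‖G v - x‖ = ‖A + β • G (shiftedInv G β v) - β • shiftedInv G β x‖ := by
        simp only [A]; abel_nf
    _ ≤ ‖A‖ + ‖β • G (shiftedInv G β v)‖ + ‖β • shiftedInv G β x‖ :=
          norm_sub_le_of_le (norm_add_le _ _) le_rfl
    _ ≤ _ := by
      gcongr
      rwa [div_mul_eq_mul_div, le_div_iff₀' hβ]

theorem norm_sub_le_of_residual_le (hG : IsOfPositiveType G κ) (hκ : 0 ≤ κ)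
    {Y : Type*} [NormedAddCommGroup Y] {F : X → Y} {D : Set X} {udag ubar : X} {fdag fδ : Y}
    {ca c1 b m t : ℝ} (hca : 0 < ca) (hb : 0 < b)
    (hinv : ∀ u ∈ D, ‖F u - fdag‖ ≤ c1 → ca * ‖G (u - udag)‖ ≤ ‖F u - fdag‖)
    {u v : X} (hu : u ∈ D) (hv : G v = u - ubar)
    (hres : ‖F u - fδ‖ ≤ b * m) (hpen : b * b * ‖v‖ ≤ b * m) (hfδ : ‖fδ - fdag‖ ≤ b * t)
    (hc1 : b * (m + t) ≤ c1) :
    ‖u - udag‖ ≤ κ / ca * (m + t) + (1 + κ) * m + ‖b • shiftedInv G b (udag - ubar)‖ := by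
  have hF : ‖F u - fdag‖ ≤ b * (m + t) := by
    linarith [norm_sub_le_norm_sub_add_norm_sub (F u) fδ fdag]
  have hGu : ‖G (u - udag)‖ ≤ b * (m + t) / ca := by
    rw [le_div_iff₀' hca]
    exact (hinv u hu (hF.trans hc1)).trans hF
  have hvm : b * ‖v‖ ≤ m := le_of_mul_le_mul_left (by rwa [← mul_assoc]) hb
  have hy : u - udag = G v - (udag - ubar) := by rw [hv]; abel
  calc ‖u - udag‖
      ≤ κ / b * ‖G (u - udag)‖ + (1 + κ) * (b * ‖v‖) + ‖b • shiftedInv G b (udag - ubar)‖ := by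
        rw [hy]; exact hG.norm_sub_le hb v _
    _ ≤ κ / b * (b * (m + t) / ca) + (1 + κ) * m + ‖b • shiftedInv G b (udag - ubar)‖ := by
        gcongr
    _ = _ := by field_simp

theorem norm_sub_le_of_minimizer (hG : IsOfPositiveType G κ) (hκ : 0 ≤ κ)
    {Y : Type*} [NormedAddCommGroup Y] {F : X → Y} {D : Set X} {J : X → ℝ} {udag ubar : X}
    {fdag fδ : Y} {ca cb c0 c1 r α b θ t m : ℝ} (hca : 0 < ca) (hcb : 0 ≤ cb) (hr : 0 < r)
    (hb : 0 < b) (hθ : 0 < θ) (hα : α = (b * b) ^ r)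
    (hfwd : ∀ u ∈ D, ‖G (u - udag)‖ ≤ c0 → ‖F u - fdag‖ ≤ cb * ‖G (u - udag)‖)
    (hinv : ∀ u ∈ D, ‖F u - fdag‖ ≤ c1 → ca * ‖G (u - udag)‖ ≤ ‖F u - fdag‖)
    (hJ : ∀ u ∈ D, ∀ v, G v = u - ubar → J u = ‖F u - fδ‖ ^ r + α * ‖v‖ ^ r)
    (hw : ubar + G (shiftedInv G (θ * b) (udag - ubar)) ∈ D)
    (hc0 : θ * b * ((1 + κ) * ‖udag - ubar‖) ≤ c0)
    (hm : 2 ^ r⁻¹ * (cb * ((1 + κ) * ‖udag - ubar‖) * θ + t +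
      ‖(θ * b) • shiftedInv G (θ * b) (udag - ubar)‖ / θ) ≤ m)
    (hfδ : ‖fδ - fdag‖ ≤ b * t) (hc1 : b * (m + t) ≤ c1)
    {u v : X} (hu : u ∈ D) (hv : G v = u - ubar) (hmin : ∀ u' ∈ D, J u ≤ J u') :
    ‖u - udag‖ ≤ κ / ca * (m + t) + (1 + κ) * m + ‖b • shiftedInv G b (udag - ubar)‖ := by
  set x := udag - ubar
  set β := θ * b with hβdef
  have hβ : 0 < β := mul_pos hθ hb
  set p := shiftedInv G β x
  have hwu : ubar + G p - udag = -(β • p) := hG.add_apply_shiftedInv_sub hβ udag ubar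
  have hGw : ‖G (ubar + G p - udag)‖ ≤ β * ((1 + κ) * ‖x‖) := by
    rw [hwu, map_neg, map_smul, norm_neg, norm_smul, Real.norm_of_nonneg hβ.le]
    exact mul_le_mul_of_nonneg_left (hG.norm_apply_shiftedInv_le hβ x) hβ.le
  have hFw : ‖F (ubar + G p) - fδ‖ ≤ b * (cb * ((1 + κ) * ‖x‖) * θ + t) := by
    have hfwd' := hfwd _ hw (hGw.trans hc0)
    have hcb' := mul_le_mul_of_nonneg_left hGw hcb
    linarith [norm_sub_le_norm_sub_add_norm_sub (F (ubar + G p)) fdag fδ, norm_sub_rev fdag fδ]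
  have hpw : b * b * ‖p‖ = b * (‖β • p‖ / θ) := by
    rw [norm_smul, Real.norm_of_nonneg hβ.le, hβdef]; field_simp
  have hmax := max_le_of_le_competitor hr hb.le hα hJ hu hv hw
    (add_sub_cancel_left ubar (G p)).symm (hmin _ hw)
  have hcomp : 2 ^ r⁻¹ * max ‖F (ubar + G p) - fδ‖ (b * b * ‖p‖) ≤ b * m := by
    have hρ : 0 ≤ ‖β • p‖ / θ := by positivity
    have ht : 0 ≤ t := nonneg_of_mul_nonneg_right ((norm_nonneg _).trans hfδ) hb
    have hK : 0 ≤ cb * ((1 + κ) * ‖x‖) * θ := by positivity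
    calc 2 ^ r⁻¹ * max ‖F (ubar + G p) - fδ‖ (b * b * ‖p‖)
        ≤ 2 ^ r⁻¹ * (b * (cb * ((1 + κ) * ‖x‖) * θ + t + ‖β • p‖ / θ)) := by
          gcongr
          refine max_le (hFw.trans ?_) (hpw.trans_le ?_) <;>
            exact mul_le_mul_of_nonneg_left (by linarith) hb.le
      _ = b * (2 ^ r⁻¹ * (cb * ((1 + κ) * ‖x‖) * θ + t + ‖β • p‖ / θ)) := by ring
      _ ≤ b * m := by gcongr
  exact hG.norm_sub_le_of_residual_le hκ hca hb hinv hu hv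
    ((le_max_left _ _).trans (hmax.trans hcomp)) ((le_max_right _ _).trans (hmax.trans hcomp))
    hfδ hc1

theorem eventually_norm_sub_le (hG : IsOfPositiveType G κ) (hκ : 0 ≤ κ)
    {Y : Type*} [NormedAddCommGroup Y] {F : X → Y} {DF D : Set X} {udag ubar : X} {fdag : Y}
    {ca cb c0 c1 r : ℝ} {T : ℝ → Y → X → ℝ} {αf : ℝ → ℝ}
    (hD : D = DF ∩ range G) (hudag : udag ∈ interior DF) (hubar : ubar ∈ range G)
    (hsmooth : udag ∈ closure (range G))
    (hca : 0 < ca) (hcb : 0 ≤ cb) (hc0 : 0 < c0) (hc1 : 0 < c1) (hr : 0 < r)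
    (hfwd : ∀ u ∈ D, ‖G (u - udag)‖ ≤ c0 → ‖F u - fdag‖ ≤ cb * ‖G (u - udag)‖)
    (hinv : ∀ u ∈ D, ‖F u - fdag‖ ≤ c1 → ca * ‖G (u - udag)‖ ≤ ‖F u - fdag‖)
    (hT : ∀ (α : ℝ) (fδ : Y), ∀ u ∈ D, ∀ v : X, G v = u - ubar →
      T α fδ u = ‖F u - fδ‖ ^ r + α * ‖v‖ ^ r)
    (hαpos : ∀ᶠ δ in 𝓝[>] 0, 0 < αf δ) (hα0 : Tendsto αf (𝓝[>] 0) (𝓝 0))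
    (hquot : Tendsto (fun δ : ℝ => δ / (αf δ) ^ (1 / (2 * r))) (𝓝[>] 0) (𝓝 0))
    {θ η : ℝ} (hθ : 0 < θ)
    (hη : (κ / ca + (1 + κ)) * (2 ^ r⁻¹ * (cb * ((1 + κ) * ‖udag - ubar‖) * θ)) < η) :
    ∀ᶠ δ in 𝓝[>] 0, ∀ fδ : Y, ‖fδ - fdag‖ ≤ δ → ∀ u ∈ D,
      (∀ u' ∈ D, T (αf δ) fδ u ≤ T (αf δ) fδ u') → ‖u - udag‖ ≤ η := by
  set x := udag - ubar
  set K := cb * ((1 + κ) * ‖x‖)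
  set b : ℝ → ℝ := fun δ => αf δ ^ (1 / (2 * r))
  set t : ℝ → ℝ := fun δ => δ / b δ
  have hb : Tendsto b (𝓝[>] 0) (𝓝[>] 0) :=
    (tendsto_rpow_nhdsGT_zero (by positivity)).comp (tendsto_nhdsWithin_iff.2 ⟨hα0, hαpos⟩)
  have hb0 : Tendsto b (𝓝[>] 0) (𝓝 0) := hb.mono_right nhdsWithin_le_nhds
  have hρ := hG.tendsto_smul_shiftedInv hκ (G.sub_mem_closure_range hsmooth hubar)
  have hρθ := (hρ.comp (tendsto_iff_comap.2 (comap_mulLeft_nhdsGT_zero hθ).ge)).comp hb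
  set m : ℝ → ℝ := fun δ =>
    2 ^ r⁻¹ * (K * θ + t δ + ‖(θ * b δ) • shiftedInv G (θ * b δ) x‖ / θ)
  have hm : Tendsto m (𝓝[>] 0) (𝓝 (2 ^ r⁻¹ * (K * θ + 0 + ‖(0 : X)‖ / θ))) :=
    ((tendsto_const_nhds.add hquot).add (hρθ.norm.div_const θ)).const_mul _
  have hbound : ∀ᶠ δ in 𝓝[>] 0,
      κ / ca * (m δ + t δ) + (1 + κ) * m δ + ‖b δ • shiftedInv G (b δ) x‖ < η := by
    refine ((((hm.add hquot).const_mul _).add (hm.const_mul _)).add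
      (hρ.comp hb).norm).eventually_lt_const ?_
    simp only [norm_zero, zero_div, add_zero]
    linarith
  have hc1' : ∀ᶠ δ in 𝓝[>] 0, b δ * (m δ + t δ) < c1 :=
    (hb0.mul (hm.add hquot)).eventually_lt_const (by simpa using hc1)
  have hc0' : ∀ᶠ δ in 𝓝[>] 0, θ * b δ * ((1 + κ) * ‖x‖) < c0 :=
    ((hb0.const_mul θ).mul_const _).eventually_lt_const (by simpa using hc0)
  obtain ⟨rad, hrad, hball⟩ := Metric.mem_nhds_iff.1 (mem_interior_iff_mem_nhds.1 hudag)
  have hin : ∀ᶠ δ in 𝓝[>] 0, ‖(θ * b δ) • shiftedInv G (θ * b δ) x‖ < rad :=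
    hρθ.norm.eventually_lt_const (by simpa using hrad)
  filter_upwards [hαpos, hb.eventually self_mem_nhdsWithin, hbound, hc1', hc0', hin]
    with δ hα (hbδ : 0 < b δ) hbound hc1 hc0 hin
  intro fδ hfδ u hu hmin
  obtain ⟨z, hz⟩ := hubar
  obtain ⟨v, hv⟩ : ∃ v, G v = u - ubar := by
    obtain ⟨a, ha⟩ := (hD ▸ hu).2
    exact ⟨a - z, by rw [map_sub, ha, hz]⟩
  have hw := hG.add_apply_shiftedInv_sub_mem (mul_pos hθ hbδ) hD ⟨z, hz⟩ hball hin
  have hαb : αf δ = (b δ * b δ) ^ r := by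
    rw [← Real.rpow_add hα, ← Real.rpow_mul hα.le,
      show (1 / (2 * r) + 1 / (2 * r)) * r = 1 by field_simp; ring, Real.rpow_one]
  have hfδ' : ‖fδ - fdag‖ ≤ b δ * t δ := by rwa [mul_div_cancel₀ _ hbδ.ne']
  exact (hG.norm_sub_le_of_minimizer hκ hca hcb hr hbδ hθ hαb hfwd hinv (hT (αf δ) fδ) hw hc0.le
    le_rfl hfδ' hc1.le hu hv hmin).trans hbound.le

end IsOfPositiveType

end PositiveType

theorem convergence_no_smoothness_general
    {X Y : Type*} [NormedAddCommGroup X] [NormedSpace ℝ X]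
    [NormedAddCommGroup Y]
    (G : X →L[ℝ] X)
    (κs : ℝ) (hκs : 0 < κs)
    (hpos : ∀ β : ℝ, 0 < β →
      Function.Bijective (G + β • ContinuousLinearMap.id ℝ X) ∧
      ∀ x : X, ‖x‖ ≤ κs / β * ‖(G + β • ContinuousLinearMap.id ℝ X) x‖)
    (F : X → Y) (DF : Set X)
    (D : Set X) (hD : D = DF ∩ Set.range G)
    (udag : X) (hudag : udag ∈ interior DF) (fdag : Y)
    (ca cb c0 c1 : ℝ) (hca : 0 < ca) (hcacb : ca ≤ cb) (hc0 : 0 < c0) (hc1 : 0 < c1)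
    (hfwd : ∀ u ∈ D, ‖G (u - udag)‖ ≤ c0 → ‖F u - fdag‖ ≤ cb * ‖G (u - udag)‖)
    (hinv : ∀ u ∈ D, ‖F u - fdag‖ ≤ c1 → ca * ‖G (u - udag)‖ ≤ ‖F u - fdag‖)
    (r : ℝ) (hr : 0 < r) (ubar : X) (hubar : ubar ∈ Set.range G)
    (T : ℝ → Y → X → ℝ)
    (hT : ∀ (α : ℝ) (fδ : Y), ∀ u ∈ D, ∀ v : X, G v = u - ubar →
      T α fδ u = ‖F u - fδ‖ ^ r + α * ‖v‖ ^ r)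
    -- no explicit smoothness:
    (hsmooth : udag ∈ closure (Set.range G))
    -- the a priori parameter choice on `(0, δ̄]`:
    (δbar : ℝ) (hδbar : 0 < δbar)
    (αf : ℝ → ℝ) (hαpos : ∀ δ ∈ Set.Ioc (0:ℝ) δbar, 0 < αf δ)
    (hα0 : Tendsto αf (𝓝[>] (0:ℝ)) (𝓝 0))
    (hquot : Tendsto (fun δ : ℝ => δ / (αf δ) ^ (1 / (2 * r))) (𝓝[>] (0:ℝ)) (𝓝 0)) :
    ∀ ε : ℝ, 0 < ε → ∃ δ₀ : ℝ, 0 < δ₀ ∧ δ₀ ≤ δbar ∧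
      ∀ δ ∈ Set.Ioc (0:ℝ) δ₀, ∀ fδ : Y, ‖fδ - fdag‖ ≤ δ →
      ∀ u ∈ D, (∀ u' ∈ D, T (αf δ) fδ u ≤ T (αf δ) fδ u') →
        ‖u - udag‖ ≤ ε := by
  intro ε hε
  set C := (κs / ca + (1 + κs)) * 2 ^ r⁻¹ * (cb * ((1 + κs) * ‖udag - ubar‖))
  obtain ⟨θ, hθε, hθ⟩ : ∃ θ, C * θ < ε ∧ 0 < θ :=
    ((tendsto_nhdsWithin_of_tendsto_nhds ((continuous_const_mul C).tendsto' 0 0 (mul_zero C))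
      ).eventually_lt_const hε |>.and (self_mem_nhdsWithin : Ioi (0 : ℝ) ∈ 𝓝[>] 0)).exists
  refine exists_forall_Ioc_of_eventually_nhdsGT ?_ hδbar
  exact IsOfPositiveType.eventually_norm_sub_le hpos hκs.le hD hudag hubar hsmooth hca
    (hca.le.trans hcacb) hc0 hc1 hr hfwd hinv hT (eventually_of_mem (Ioc_mem_nhdsGT hδbar) hαpos)
    hα0 hquot hθ (by linarith)

/-- Theorem 3.2(a) specialized (degree `a = 1`, `κ = 1/(2r)`): convergence without
explicit smoothness under an a priori parameter choice with `α(δ) → 0` and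
`δ/α(δ)^{1/(2r)} → 0` as `δ → 0`. -/
theorem convergence_no_smoothness
    {X Y : Type*} [NormedAddCommGroup X] [NormedSpace ℝ X] [CompleteSpace X]
    [NormedAddCommGroup Y] [NormedSpace ℝ Y]
    (G : X →L[ℝ] X) (hGinj : Function.Injective G)
    (κs : ℝ) (hκs : 0 < κs)
    (hpos : ∀ β : ℝ, 0 < β →
      Function.Bijective (G + β • ContinuousLinearMap.id ℝ X) ∧
      ∀ x : X, ‖x‖ ≤ κs / β * ‖(G + β • ContinuousLinearMap.id ℝ X) x‖)
    (F : X → Y) (DF : Set X) (hDFclosed : IsClosed DF) (hFcont : ContinuousOn F DF)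
    (D : Set X) (hD : D = DF ∩ Set.range G) (hDne : D.Nonempty)
    (udag : X) (hudag : udag ∈ interior DF) (fdag : Y) (hFudag : F udag = fdag)
    (ca cb c0 c1 : ℝ) (hca : 0 < ca) (hcacb : ca ≤ cb) (hc0 : 0 < c0) (hc1 : 0 < c1)
    (hfwd : ∀ u ∈ D, ‖G (u - udag)‖ ≤ c0 → ‖F u - fdag‖ ≤ cb * ‖G (u - udag)‖)
    (hinv : ∀ u ∈ D, ‖F u - fdag‖ ≤ c1 → ca * ‖G (u - udag)‖ ≤ ‖F u - fdag‖)
    (r : ℝ) (hr : 0 < r) (ubar : X) (hubar : ubar ∈ Set.range G)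
    (T : ℝ → Y → X → ℝ)
    (hT : ∀ (α : ℝ) (fδ : Y), ∀ u ∈ D, ∀ v : X, G v = u - ubar →
      T α fδ u = ‖F u - fδ‖ ^ r + α * ‖v‖ ^ r)
    -- no explicit smoothness:
    (hsmooth : udag ∈ closure (Set.range G))
    -- the a priori parameter choice on `(0, δ̄]`:
    (δbar : ℝ) (hδbar : 0 < δbar)
    (αf : ℝ → ℝ) (hαpos : ∀ δ ∈ Set.Ioc (0:ℝ) δbar, 0 < αf δ)
    (hα0 : Tendsto αf (𝓝[>] (0:ℝ)) (𝓝 0))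
    (hquot : Tendsto (fun δ : ℝ => δ / (αf δ) ^ (1 / (2 * r))) (𝓝[>] (0:ℝ)) (𝓝 0)) :
    ∀ ε : ℝ, 0 < ε → ∃ δ₀ : ℝ, 0 < δ₀ ∧ δ₀ ≤ δbar ∧
      ∀ δ ∈ Set.Ioc (0:ℝ) δ₀, ∀ fδ : Y, ‖fδ - fdag‖ ≤ δ →
      ∀ u ∈ D, (∀ u' ∈ D, T (αf δ) fδ u ≤ T (αf δ) fδ u') →
        ‖u - udag‖ ≤ ε :=
  convergence_no_smoothness_general G κs hκs hpos F DF D hD udag hudag fdag ca cb c0 c1 hca hcacb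
    hc0 hc1 hfwd hinv r hr ubar hubar T hT hsmooth δbar hδbar αf hαpos hα0 hquot
end

section
/- Hölder convergence rate for an a priori parameter choice: assume u† − ū ∈ range(G) and let the parameter choice satisfy k₁ δ^r ≤ α(δ) ≤ k₂ δ^r for constants 0 < k₁ ≤ k₂ (this is α(δ) ∼ δ^{1/(κ(p+a))} with κ = 1/(2r), p = a = 1). Then there exist δ₀ > 0 and a finite constant K > 0 such that for all δ ∈ (0, δ₀], all data f^δ with ‖f^δ − f†‖ ≤ δ, and every minimizer u of T_{α(δ)}^δ over D, one has ‖u − u†‖ ≤ K δ^{1/2}. -/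
/-!
Comparing the minimizer `u` with `u†`, which is admissible because of the source condition
`u† - ū = G w`, bounds both the residual `‖F u - f^δ‖ = O(δ)` and the penalty `‖G⁻¹(u - ū)‖`.
The inverse nonlinearity condition then turns the residual bound into `‖G (u - u†)‖ = O(δ)`,
and `y := G⁻¹(u - ū) - w` is bounded with `G y = u - u†`. Interpolating between
`‖G² y‖ = O(δ)` and `‖y‖ = O(1)` through the resolvent bound with `β = √δ` gives
`‖u - u†‖ = ‖G y‖ = O(√δ)`.
-/

section Interpolation

variable {X : Type*} [NormedAddCommGroup X] [NormedSpace ℝ X]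

/-- Apply the resolvent bound to `G x - β x`, using `(G + β) (G - β) = G² - β²`. -/
theorem norm_apply_le_of_resolvent_bound (G : X →L[ℝ] X) {κ β : ℝ} (hκ : 0 ≤ κ) (hβ : 0 < β)
    (hres : ∀ x : X, ‖x‖ ≤ κ / β * ‖(G + β • ContinuousLinearMap.id ℝ X) x‖) (x : X) :
    ‖G x‖ ≤ κ / β * ‖G (G x)‖ + (κ + 1) * β * ‖x‖ := by
  have hfactor : (G + β • ContinuousLinearMap.id ℝ X) (G x - β • x) = G (G x) - (β * β) • x := by
    simp only [add_apply, smul_apply, ContinuousLinearMap.id_apply, map_sub, map_smul]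
    module
  have hshift : ‖G x - β • x‖ ≤ κ / β * (‖G (G x)‖ + β * β * ‖x‖) :=
    calc ‖G x - β • x‖ ≤ κ / β * ‖G (G x) - (β * β) • x‖ := hfactor ▸ hres _
      _ ≤ κ / β * (‖G (G x)‖ + β * β * ‖x‖) := by
        gcongr
        refine (norm_sub_le _ _).trans_eq ?_
        rw [norm_smul, Real.norm_of_nonneg (by positivity)]
  calc ‖G x‖ = ‖(G x - β • x) + β • x‖ := by rw [sub_add_cancel]
    _ ≤ ‖G x - β • x‖ + β * ‖x‖ := by
      refine (norm_add_le _ _).trans_eq ?_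
      rw [norm_smul, Real.norm_of_nonneg hβ.le]
    _ ≤ κ / β * (‖G (G x)‖ + β * β * ‖x‖) + β * ‖x‖ := by gcongr
    _ = κ / β * ‖G (G x)‖ + (κ + 1) * β * ‖x‖ := by field_simp; ring

theorem norm_apply_le_mul_sqrt_of_resolvent_bound (G : X →L[ℝ] X) {κ δ a R : ℝ}
    (hκ : 0 ≤ κ) (hδ : 0 < δ)
    (hres : ∀ x : X, ‖x‖ ≤ κ / √δ * ‖(G + √δ • ContinuousLinearMap.id ℝ X) x‖)
    {x : X} (hGG : ‖G (G x)‖ ≤ a * δ) (hx : ‖x‖ ≤ R) :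
    ‖G x‖ ≤ (κ * a + (κ + 1) * R) * √δ := by
  have hsqrt : 0 < √δ := Real.sqrt_pos.2 hδ
  calc ‖G x‖ ≤ κ / √δ * ‖G (G x)‖ + (κ + 1) * √δ * ‖x‖ :=
        norm_apply_le_of_resolvent_bound G hκ hsqrt hres x
    _ ≤ κ / √δ * (a * (√δ * √δ)) + (κ + 1) * √δ * R := by
        rw [Real.mul_self_sqrt hδ.le]
        gcongr
    _ = (κ * a + (κ + 1) * R) * √δ := by field_simp

end Interpolation

section TikhonovComparison

variable {ρ t s α δ r : ℝ}

theorem le_rpow_inv_mul_of_rpow_le_mul_rpow {x c : ℝ} (hx : 0 ≤ x) (hc : 0 ≤ c) (hδ : 0 ≤ δ)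
    (hr : 0 < r) (h : x ^ r ≤ c * δ ^ r) : x ≤ c ^ r⁻¹ * δ := by
  rwa [← Real.rpow_le_rpow_iff hx (by positivity) hr, Real.mul_rpow (by positivity) hδ,
    Real.rpow_inv_rpow hc hr.ne']

theorem residual_le_of_tikhonov_comparison {k₂ : ℝ} (hρ : 0 ≤ ρ) (ht : 0 ≤ t) (hs : 0 ≤ s)
    (hδ : 0 ≤ δ) (hr : 0 < r) (hα : 0 ≤ α) (hk₂ : 0 ≤ k₂) (hαk₂ : α ≤ k₂ * δ ^ r)
    (h : ρ ^ r + α * t ^ r ≤ δ ^ r + α * s ^ r) :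
    ρ ≤ (1 + k₂ * s ^ r) ^ r⁻¹ * δ := by
  refine le_rpow_inv_mul_of_rpow_le_mul_rpow hρ (by positivity) hδ hr ?_
  have hpenalty : 0 ≤ α * t ^ r := by positivity
  have hsource : α * s ^ r ≤ k₂ * δ ^ r * s ^ r := by gcongr
  linarith

theorem penalty_le_of_tikhonov_comparison {k₁ : ℝ} (hρ : 0 ≤ ρ) (ht : 0 ≤ t) (hs : 0 ≤ s)
    (hδ : 0 < δ) (hr : 0 < r) (hk₁ : 0 < k₁) (hk₁α : k₁ * δ ^ r ≤ α)
    (h : ρ ^ r + α * t ^ r ≤ δ ^ r + α * s ^ r) :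
    t ≤ (k₁⁻¹ + s ^ r) ^ r⁻¹ := by
  have hα : 0 < α := lt_of_lt_of_le (by positivity) hk₁α
  have hδα : δ ^ r ≤ α * k₁⁻¹ := by rw [← div_eq_mul_inv, le_div_iff₀ hk₁]; linarith
  have hρr : 0 ≤ ρ ^ r := by positivity
  have htr : t ^ r ≤ k₁⁻¹ + s ^ r := le_of_mul_le_mul_left (by linarith) hα
  simpa using le_rpow_inv_mul_of_rpow_le_mul_rpow ht (by positivity) zero_le_one hr
    (by simpa using htr)

end TikhonovComparison

theorem holder_rate_apriori_general
    {X Y : Type*} [NormedAddCommGroup X] [NormedSpace ℝ X]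
    [NormedAddCommGroup Y]
    (G : X →L[ℝ] X)
    (κs : ℝ) (hκs : 0 < κs)
    (hpos : ∀ β : ℝ, 0 < β →
      Function.Bijective (G + β • ContinuousLinearMap.id ℝ X) ∧
      ∀ x : X, ‖x‖ ≤ κs / β * ‖(G + β • ContinuousLinearMap.id ℝ X) x‖)
    (F : X → Y) (DF : Set X)
    (D : Set X) (hD : D = DF ∩ Set.range G)
    (udag : X) (hudag : udag ∈ interior DF) (fdag : Y) (hFudag : F udag = fdag)
    (ca c1 : ℝ) (hca : 0 < ca) (hc1 : 0 < c1)
    (hinv : ∀ u ∈ D, ‖F u - fdag‖ ≤ c1 → ca * ‖G (u - udag)‖ ≤ ‖F u - fdag‖)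
    (r : ℝ) (hr : 0 < r) (ubar : X) (hubar : ubar ∈ Set.range G)
    (T : ℝ → Y → X → ℝ)
    (hT : ∀ (α : ℝ) (fδ : Y), ∀ u ∈ D, ∀ v : X, G v = u - ubar →
      T α fδ u = ‖F u - fδ‖ ^ r + α * ‖v‖ ^ r)
    -- Hölder smoothness:
    (hHolder : udag - ubar ∈ Set.range G)
    -- the a priori parameter choice `α(δ) ∼ δ^r`:
    (k₁ k₂ : ℝ) (hk₁ : 0 < k₁) (hk₁k₂ : k₁ ≤ k₂)
    (αf : ℝ → ℝ)
    (hα : ∀ δ : ℝ, 0 < δ → k₁ * δ ^ r ≤ αf δ ∧ αf δ ≤ k₂ * δ ^ r) :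
    ∃ δ₀ > 0, ∃ K > 0, ∀ δ ∈ Set.Ioc (0:ℝ) δ₀, ∀ fδ : Y, ‖fδ - fdag‖ ≤ δ →
      ∀ u ∈ D, (∀ u' ∈ D, T (αf δ) fδ u ≤ T (αf δ) fδ u') →
        ‖u - udag‖ ≤ K * δ ^ ((1:ℝ) / 2) := by
  obtain ⟨w, hw⟩ := hHolder
  obtain ⟨s₀, hs₀⟩ := hubar
  have hudagD : udag ∈ D := hD ▸ ⟨interior_subset hudag, s₀ + w, by rw [map_add, hs₀, hw]; abel⟩
  have hk₂ : 0 ≤ k₂ := hk₁.le.trans hk₁k₂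
  obtain ⟨C, hC0, hC⟩ : ∃ C ≥ 0, C = (1 + k₂ * ‖w‖ ^ r) ^ r⁻¹ := ⟨_, by positivity, rfl⟩
  obtain ⟨R, hR0, hR⟩ : ∃ R ≥ 0, R = (k₁⁻¹ + ‖w‖ ^ r) ^ r⁻¹ + ‖w‖ := ⟨_, by positivity, rfl⟩
  refine ⟨c1 / (C + 1), by positivity, κs * ((C + 1) / ca) + (κs + 1) * R, by positivity, ?_⟩
  rintro δ ⟨hδ, hδ₀⟩ fδ hfδ u huD hmin
  obtain ⟨hαk₁, hαk₂⟩ := hα δ hδ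
  obtain ⟨v, hv⟩ : ∃ v, G v = u - ubar := by
    obtain ⟨v', hv'⟩ := (hD ▸ huD).2
    exact ⟨v' - s₀, by rw [map_sub, hv', hs₀]⟩
  have hcomparison : ‖F u - fδ‖ ^ r + αf δ * ‖v‖ ^ r ≤ δ ^ r + αf δ * ‖w‖ ^ r := by
    have hdata : ‖F udag - fδ‖ ^ r ≤ δ ^ r := by
      rw [hFudag, norm_sub_rev]; gcongr
    have := hmin udag hudagD
    rw [hT _ _ u huD v hv, hT _ _ udag hudagD w hw] at this
    linarith
  have hαf : 0 ≤ αf δ := (by positivity : 0 ≤ k₁ * δ ^ r).trans hαk₁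
  have hresidual : ‖F u - fδ‖ ≤ C * δ := hC ▸ residual_le_of_tikhonov_comparison
    (norm_nonneg _) (norm_nonneg _) (norm_nonneg _) hδ.le hr hαf hk₂ hαk₂ hcomparison
  have hpenalty : ‖v‖ ≤ (k₁⁻¹ + ‖w‖ ^ r) ^ r⁻¹ := penalty_le_of_tikhonov_comparison
    (norm_nonneg _) (norm_nonneg _) (norm_nonneg _) hδ hr hk₁ hαk₁ hcomparison
  have hFu : ‖F u - fdag‖ ≤ (C + 1) * δ := by
    calc ‖F u - fdag‖ ≤ ‖F u - fδ‖ + ‖fδ - fdag‖ := norm_sub_le_norm_sub_add_norm_sub _ _ _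
      _ ≤ (C + 1) * δ := by linarith
  have hGu : ‖G (u - udag)‖ ≤ (C + 1) / ca * δ := by
    rw [div_mul_eq_mul_div, le_div_iff₀ hca]
    have := hinv u huD (hFu.trans ((le_div_iff₀' (by positivity)).1 hδ₀))
    linarith
  have hy : G (v - w) = u - udag := by rw [map_sub, hv, hw]; abel
  have hyR : ‖v - w‖ ≤ R := hR ▸ (norm_sub_le _ _).trans (by gcongr)
  rw [← hy, ← Real.sqrt_eq_rpow]
  exact norm_apply_le_mul_sqrt_of_resolvent_bound G hκs.le hδ (hpos _ (by positivity)).2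
    (hy ▸ hGu) hyR

/-- Theorem 3.2(b) specialized (Hölder smoothness `p = 1`, degree `a = 1`,
`κ = 1/(2r)`): rate `‖u_{α(δ)}^δ − u†‖ = O(δ^{1/2})` under the a priori choice
`α(δ) ∼ δ^r`. -/
theorem holder_rate_apriori
    {X Y : Type*} [NormedAddCommGroup X] [NormedSpace ℝ X] [CompleteSpace X]
    [NormedAddCommGroup Y] [NormedSpace ℝ Y]
    (G : X →L[ℝ] X) (hGinj : Function.Injective G)
    (κs : ℝ) (hκs : 0 < κs)
    (hpos : ∀ β : ℝ, 0 < β →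
      Function.Bijective (G + β • ContinuousLinearMap.id ℝ X) ∧
      ∀ x : X, ‖x‖ ≤ κs / β * ‖(G + β • ContinuousLinearMap.id ℝ X) x‖)
    (F : X → Y) (DF : Set X) (hDFclosed : IsClosed DF) (hFcont : ContinuousOn F DF)
    (D : Set X) (hD : D = DF ∩ Set.range G) (hDne : D.Nonempty)
    (udag : X) (hudag : udag ∈ interior DF) (fdag : Y) (hFudag : F udag = fdag)
    (ca cb c0 c1 : ℝ) (hca : 0 < ca) (hcacb : ca ≤ cb) (hc0 : 0 < c0) (hc1 : 0 < c1)
    (hfwd : ∀ u ∈ D, ‖G (u - udag)‖ ≤ c0 → ‖F u - fdag‖ ≤ cb * ‖G (u - udag)‖)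
    (hinv : ∀ u ∈ D, ‖F u - fdag‖ ≤ c1 → ca * ‖G (u - udag)‖ ≤ ‖F u - fdag‖)
    (r : ℝ) (hr : 0 < r) (ubar : X) (hubar : ubar ∈ Set.range G)
    (T : ℝ → Y → X → ℝ)
    (hT : ∀ (α : ℝ) (fδ : Y), ∀ u ∈ D, ∀ v : X, G v = u - ubar →
      T α fδ u = ‖F u - fδ‖ ^ r + α * ‖v‖ ^ r)
    -- Hölder smoothness:
    (hHolder : udag - ubar ∈ Set.range G)
    -- the a priori parameter choice `α(δ) ∼ δ^r`:
    (k₁ k₂ : ℝ) (hk₁ : 0 < k₁) (hk₁k₂ : k₁ ≤ k₂)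
    (αf : ℝ → ℝ)
    (hα : ∀ δ : ℝ, 0 < δ → k₁ * δ ^ r ≤ αf δ ∧ αf δ ≤ k₂ * δ ^ r) :
    ∃ δ₀ > 0, ∃ K > 0, ∀ δ ∈ Set.Ioc (0:ℝ) δ₀, ∀ fδ : Y, ‖fδ - fdag‖ ≤ δ →
      ∀ u ∈ D, (∀ u' ∈ D, T (αf δ) fδ u ≤ T (αf δ) fδ u') →
        ‖u - udag‖ ≤ K * δ ^ ((1:ℝ) / 2) :=
  holder_rate_apriori_general G κs hκs hpos F DF D hD udag hudag fdag hFudag ca c1 hca hc1 hinv r hr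
    ubar hubar T hT hHolder k₁ k₂ hk₁ hk₁k₂ αf hα
end

section
/- Inverse nonlinearity estimate for the exponential Volterra operator: let u† ∈ L^∞(0,1) and set c₁ := exp(−‖Gu†‖_∞). Then for every ε ∈ (0, c₁) and every u ∈ L^∞(0,1) with ‖F(u) − F(u†)‖_∞ ≤ c₁ − ε, one has ε ‖G(u − u†)‖_∞ ≤ ‖F(u) − F(u†)‖_∞. -/
/-!
Pointwise, `exp` is bounded below by `c₁` at `Gu†(x)` and hence, by the smallness assumption,
by `ε` at `Gu(x)` as well; on the region where `exp ≥ ε` it is expanding with factor `ε`, so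
`ε |Gu(x) − Gu†(x)| ≤ |F(u)(x) − F(u†)(x)|` almost everywhere.
-/

open MeasureTheory

namespace MeasureTheory.Lp

variable {α E : Type*} [MeasurableSpace α] {μ : Measure α} [NormedAddCommGroup E]

theorem ae_norm_le_norm_top (f : Lp E ⊤ μ) : ∀ᵐ x ∂μ, ‖f x‖ ≤ ‖f‖ := by
  filter_upwards [ae_le_eLpNormEssSup (μ := μ) (f := (f : α → E))] with x hx
  rw [norm_def, eLpNorm_exponent_top, ← ofReal_norm] at *
  exact (ENNReal.ofReal_le_iff_le_toReal (by simpa using eLpNorm_ne_top f)).1 hx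

theorem norm_le_of_ae_bound_top {f : Lp E ⊤ μ} {C : ℝ} (hC : 0 ≤ C)
    (hfC : ∀ᵐ x ∂μ, ‖f x‖ ≤ C) : ‖f‖ ≤ C := by
  rw [norm_def, eLpNorm_exponent_top]
  exact ENNReal.toReal_le_of_le_ofReal hC (eLpNormEssSup_le_of_ae_bound hfC)

end MeasureTheory.Lp

namespace Real

theorem mul_abs_sub_le_abs_exp_sub_exp {ε a b : ℝ} (ha : ε ≤ exp a)
    (hb : ε ≤ exp b) : ε * |a - b| ≤ |exp a - exp b| := by
  wlog hab : a ≤ b generalizing a b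
  · rw [abs_sub_comm, abs_sub_comm (exp a)]
    exact this hb ha (le_of_not_ge hab)
  have hexp : exp a * (b - a) ≤ exp b - exp a := by
    calc exp a * (b - a) = exp a * (b - a + 1) - exp a := by ring
      _ ≤ exp a * exp (b - a) - exp a := by gcongr; exact add_one_le_exp _
      _ = exp b - exp a := by rw [← exp_add, add_sub_cancel]
  rw [abs_sub_comm, abs_of_nonneg (sub_nonneg.2 hab), abs_sub_comm,
    abs_of_nonneg (sub_nonneg.2 (exp_le_exp.2 hab))]
  exact (mul_le_mul_of_nonneg_right ha (sub_nonneg.2 hab)).trans hexp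

theorem mul_abs_sub_le_abs_exp_sub_exp_of_abs_le {c ε a b : ℝ} (hb : c ≤ exp b)
    (h : |exp a - exp b| ≤ c - ε) : ε * |a - b| ≤ |exp a - exp b| := by
  have hc : ε ≤ c := sub_nonneg.1 ((abs_nonneg _).trans h)
  refine mul_abs_sub_le_abs_exp_sub_exp ?_ (hc.trans hb)
  linarith [neg_abs_le (exp a - exp b)]

end Real

theorem exp_volterra_inverse_estimate_general
    (μ : Measure ℝ)
    (G : Lp ℝ ⊤ μ →L[ℝ] Lp ℝ ⊤ μ)
    (F : Lp ℝ ⊤ μ → Lp ℝ ⊤ μ)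
    (hF : ∀ u : Lp ℝ ⊤ μ, (F u : ℝ → ℝ) =ᵐ[μ] fun x => Real.exp ((G u : ℝ → ℝ) x))
    (udag : Lp ℝ ⊤ μ) (c₁ : ℝ) (hc₁ : c₁ = Real.exp (-‖G udag‖)) :
    ∀ ε ∈ Set.Ioo (0:ℝ) c₁, ∀ u : Lp ℝ ⊤ μ, ‖F u - F udag‖ ≤ c₁ - ε →
      ε * ‖G (u - udag)‖ ≤ ‖F u - F udag‖ := by
  intro ε hε u hle
  have hc₁_le : ∀ᵐ x ∂μ, c₁ ≤ Real.exp (G udag x) := by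
    filter_upwards [Lp.ae_norm_le_norm_top (G udag)] with x hx
    rw [hc₁, Real.exp_le_exp]
    linarith [neg_abs_le (G udag x), Real.norm_eq_abs (G udag x)]
  rw [← Real.norm_of_nonneg hε.1.le, ← norm_smul, map_sub]
  refine Lp.norm_le_of_ae_bound_top (norm_nonneg _) ?_
  filter_upwards [Lp.coeFn_smul ε (G u - G udag), Lp.coeFn_sub (G u) (G udag),
    Lp.coeFn_sub (F u) (F udag), hF u, hF udag, Lp.ae_norm_le_norm_top (F u - F udag),
    hc₁_le] with x hGε hG hF' hFu hFudag hFx hc₁x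
  rw [hF', Pi.sub_apply, hFu, hFudag, Real.norm_eq_abs] at hFx
  rw [hGε, Pi.smul_apply, hG, Pi.sub_apply, smul_eq_mul, norm_mul, Real.norm_of_nonneg hε.1.le,
    Real.norm_eq_abs]
  exact (Real.mul_abs_sub_le_abs_exp_sub_exp_of_abs_le hc₁x (hFx.trans hle)).trans hFx

/-- Inverse nonlinearity estimate for the exponential Volterra operator on `L^∞(0,1)`:
with `c₁ = exp(−‖Gu†‖_∞)`, for `ε ∈ (0,c₁)` and `‖F(u) − F(u†)‖_∞ ≤ c₁ − ε` one has
`ε‖G(u − u†)‖_∞ ≤ ‖F(u) − F(u†)‖_∞`. -/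
theorem exp_volterra_inverse_estimate
    (μ : Measure ℝ) (hμ : μ = volume.restrict (Set.Ioo 0 1))
    (G : Lp ℝ ⊤ μ →L[ℝ] Lp ℝ ⊤ μ)
    (hG : ∀ u : Lp ℝ ⊤ μ, (G u : ℝ → ℝ) =ᵐ[μ] fun x => ∫ ξ in Set.Ioc (0:ℝ) x, u ξ ∂μ)
    (F : Lp ℝ ⊤ μ → Lp ℝ ⊤ μ)
    (hF : ∀ u : Lp ℝ ⊤ μ, (F u : ℝ → ℝ) =ᵐ[μ] fun x => Real.exp ((G u : ℝ → ℝ) x))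
    (udag : Lp ℝ ⊤ μ) (c₁ : ℝ) (hc₁ : c₁ = Real.exp (-‖G udag‖)) :
    ∀ ε ∈ Set.Ioo (0:ℝ) c₁, ∀ u : Lp ℝ ⊤ μ, ‖F u - F udag‖ ≤ c₁ - ε →
      ε * ‖G (u - udag)‖ ≤ ‖F u - F udag‖ :=
  exp_volterra_inverse_estimate_general μ G F hF udag c₁ hc₁
end
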